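/- arXiv:2604.28186 — 8 statements merged into one kernel-verified Lean document; each statement's English description precedes it below -/
import Mathlib

section
/- Consider the three-player five-coin division game: each player's action set is the set of all six strict rankings of the three players; if at least two players choose the same ranking r, then the player ranked first in r receives 3, the player ranked second receives 2, and the player ranked third receives 0; if all three chosen rankings are pairwise distinct, every player receives 0. Then for every probability distribution π over joint actions satisfying E_π[𝒰_1] ≥ E_π[𝒰_2] ≥ E_π[𝒰_3], one has E_π[𝒰_2] < 3 and E_π[𝒰_3] < 2; moreover, if players 2 and 3 both deterministically choose the ranking (P2 ≻ P3 ≻ P1), then regardless of player 1's action player 2 receives utility exactly 3 and player 3 receives utility exactly 2. Consequently the coalition {2,3} has a joint deviation that strictly increases both of its members' expected utilities over E_π[𝒰_2] and E_π[𝒰_3]. -/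
open Finset

/-- A strict ranking of the three players: a bijection sending each player to a position. -/
abbrev Ranking := Equiv.Perm (Fin 3)

/-- The prize attached to each position: first gets 3 coins, second gets 2, third gets 0. -/
noncomputable def prize : Fin 3 → ℝ := ![3, 2, 0]

/-- Utility of player `i` in the three-player five-coin division game: if at least two
players choose the same ranking `r`, payoffs are distributed according to `r`; otherwise
everyone gets 0. -/
noncomputable def coinU (i : Fin 3) (a : Fin 3 → Ranking) : ℝ :=
  if a 0 = a 1 then prize (a 0 i)
  else if a 0 = a 2 then prize (a 0 i)
  else if a 1 = a 2 then prize (a 1 i)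
  else 0

/-- The ranking P2 ≻ P3 ≻ P1: player 2 (index 1) is first, player 3 (index 2) is second,
player 1 (index 0) is third. -/
def r0 : Ranking := ⟨![2, 0, 1], ![1, 2, 0], by decide, by decide⟩

lemma prize_nonneg (i : Fin 3) : 0 ≤ prize i := by
  fin_cases i <;> norm_num [prize]

lemma coinU_nonneg (i : Fin 3) (a : Fin 3 → Ranking) : 0 ≤ coinU i a := by
  unfold coinU; split_ifs <;> first | exact prize_nonneg _ | norm_num

lemma prize_sum (σ : Ranking) : prize (σ 0) + prize (σ 1) + prize (σ 2) = 5 := by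
  have h := Equiv.sum_comp σ prize
  rw [Fin.sum_univ_three, Fin.sum_univ_three] at h
  rw [h]; norm_num [prize]; rfl

lemma coin_sum_le (a : Fin 3 → Ranking) :
    coinU 0 a + coinU 1 a + coinU 2 a ≤ 5 := by
  unfold coinU
  split_ifs <;> first | exact le_of_eq (prize_sum _) | norm_num

lemma r0_one : r0 1 = 0 := rfl
lemma r0_two : r0 2 = 1 := rfl

lemma coin_dev (x : Ranking) : coinU 1 ![x, r0, r0] = 3 ∧ coinU 2 ![x, r0, r0] = 2 := by
  by_cases hx : x = r0 <;>
    simp [coinU, hx, Matrix.cons_val_zero, Matrix.cons_val_one, r0_one, r0_two] <;>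
    norm_num [prize]

/-- For any joint strategy `π` with `E[𝒰₁] ≥ E[𝒰₂] ≥ E[𝒰₃]`: `E[𝒰₂] < 3` and `E[𝒰₃] < 2`;
if players 2 and 3 both deterministically play the ranking P2 ≻ P3 ≻ P1 then player 2
receives exactly 3 and player 3 exactly 2 regardless of player 1's action; consequently
the coalition {2,3} has a joint deviation strictly improving both members' expectations. -/
theorem stmt1 (π : (Fin 3 → Ranking) → ℝ)
    (hnn : ∀ a, 0 ≤ π a) (hsum : ∑ a, π a = 1)
    (h12 : (∑ a, π a * coinU 1 a) ≤ ∑ a, π a * coinU 0 a)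
    (h23 : (∑ a, π a * coinU 2 a) ≤ ∑ a, π a * coinU 1 a) :
    (∑ a, π a * coinU 1 a) < 3 ∧ (∑ a, π a * coinU 2 a) < 2 ∧
    (∀ x : Ranking, coinU 1 ![x, r0, r0] = 3 ∧ coinU 2 ![x, r0, r0] = 2) ∧
    ((∑ a, π a * coinU 1 a) < ∑ a, π a * coinU 1 (fun j => if j = 0 then a 0 else r0)) ∧
    ((∑ a, π a * coinU 2 a) < ∑ a, π a * coinU 2 (fun j => if j = 0 then a 0 else r0)) := by
  have hsum5 : (∑ a, π a * coinU 0 a) + (∑ a, π a * coinU 1 a) + (∑ a, π a * coinU 2 a) ≤ 5 := by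
    calc (∑ a, π a * coinU 0 a) + (∑ a, π a * coinU 1 a) + (∑ a, π a * coinU 2 a)
        = ∑ a, (π a * coinU 0 a + π a * coinU 1 a + π a * coinU 2 a) := by
          rw [Finset.sum_add_distrib, Finset.sum_add_distrib]
      _ ≤ ∑ a, π a * 5 := Finset.sum_le_sum (fun a _ => by
          have h := coin_sum_le a
          nlinarith [hnn a])
      _ = 5 := by rw [← Finset.sum_mul, hsum, one_mul]
  have hE2nn : 0 ≤ ∑ a, π a * coinU 2 a :=
    Finset.sum_nonneg fun a _ => mul_nonneg (hnn a) (coinU_nonneg _ _)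
  have hE2lt : (∑ a, π a * coinU 1 a) < 3 := by linarith
  have hE3lt : (∑ a, π a * coinU 2 a) < 2 := by linarith
  have hfun : ∀ a : Fin 3 → Ranking,
      (fun j => if j = 0 then a 0 else r0) = ![a 0, r0, r0] := by
    intro a; funext j; fin_cases j <;> simp
  have hdev1 : (∑ a, π a * coinU 1 (fun j => if j = 0 then a 0 else r0)) = 3 := by
    have : ∀ a : Fin 3 → Ranking, coinU 1 (fun j => if j = 0 then a 0 else r0) = 3 := by
      intro a; rw [hfun a]; exact (coin_dev (a 0)).1
    calc (∑ a, π a * coinU 1 (fun j => if j = 0 then a 0 else r0))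
        = ∑ a, π a * 3 := Finset.sum_congr rfl (fun a _ => by rw [this a])
      _ = 3 := by rw [← Finset.sum_mul, hsum, one_mul]
  have hdev2 : (∑ a, π a * coinU 2 (fun j => if j = 0 then a 0 else r0)) = 2 := by
    have : ∀ a : Fin 3 → Ranking, coinU 2 (fun j => if j = 0 then a 0 else r0) = 2 := by
      intro a; rw [hfun a]; exact (coin_dev (a 0)).2
    calc (∑ a, π a * coinU 2 (fun j => if j = 0 then a 0 else r0))
        = ∑ a, π a * 2 := Finset.sum_congr rfl (fun a _ => by rw [this a])
      _ = 2 := by rw [← Finset.sum_mul, hsum, one_mul]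
  exact ⟨hE2lt, hE3lt, coin_dev, by rw [hdev1]; exact hE2lt, by rw [hdev2]; exact hE3lt⟩
end

section
/- For every finite game, every nonempty finite coalition family 𝒮, and every ε ≥ 0, there exists an ε-MASE that is a convex combination of at most D + 1 pure strategies (point masses on joint actions), where 𝒩(i) is the set of players j such that the action of j can affect 𝒰_i (i.e., there exist a_{−j} ∈ 𝒜_{−j} and a_j, a_j' ∈ 𝒜_j with 𝒰_i(a_j, a_{−j}) ≠ 𝒰_i(a_j', a_{−j})) and D = Σ_{S∈𝒮} Σ_{i∈S} |𝒜_{S∩𝒩(i)}|. -/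
open Finset

/-- A probability distribution on a finite type. -/
def IsDist {X : Type*} [Fintype X] (p : X → ℝ) : Prop :=
  (∀ x, 0 ≤ p x) ∧ ∑ x, p x = 1

/-- The joint action obtained from `a` by replacing its `S`-coordinates with those of `dev`. -/
def replaceProfile {N : ℕ} {A : Fin N → Type} (S : Finset (Fin N))
    (dev a : (i : Fin N) → A i) : (i : Fin N) → A i :=
  fun i => if i ∈ S then dev i else a i

/-- Coalition exploitability of a joint strategy. -/
noncomputable def CE {N : ℕ} {A : Fin N → Type} [∀ i, Fintype (A i)]
    (U : Fin N → ((i : Fin N) → A i) → ℝ) (𝒮 : Finset (Finset (Fin N)))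
    (π : ((i : Fin N) → A i) → ℝ) : ℝ :=
  sSup {x | ∃ S ∈ 𝒮, ∃ dev : (i : Fin N) → A i,
    x = (S.card : ℝ)⁻¹ * ∑ i ∈ S, ∑ a, π a * (U i (replaceProfile S dev a) - U i a)}

open scoped Classical in
/-- `𝒩(i)`: the set of players `j` whose action can affect the utility of player `i`. -/
noncomputable def depSet {N : ℕ} {A : Fin N → Type} [∀ i, Fintype (A i)]
    (U : Fin N → ((i : Fin N) → A i) → ℝ) (i : Fin N) : Finset (Fin N) :=
  Finset.univ.filter fun j =>
    ∃ (a : (k : Fin N) → A k) (b : A j), U i (Function.update a j b) ≠ U i a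

/-- `D = Σ_{S∈𝒮} Σ_{i∈S} |𝒜_{S ∩ 𝒩(i)}|`. -/
noncomputable def Dval {N : ℕ} {A : Fin N → Type} [∀ i, Fintype (A i)]
    (U : Fin N → ((i : Fin N) → A i) → ℝ) (𝒮 : Finset (Finset (Fin N))) : ℕ :=
  ∑ S ∈ 𝒮, ∑ i ∈ S, ∏ j ∈ S ∩ depSet U i, Fintype.card (A j)

section Aux

variable {N : ℕ} {A : Fin N → Type} [∀ i, Fintype (A i)] [∀ i, DecidableEq (A i)]
    [∀ i, Nonempty (A i)]

lemma not_mem_depSet {U : Fin N → ((i : Fin N) → A i) → ℝ} {i j : Fin N}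
    (hj : j ∉ depSet U i) (a : (k : Fin N) → A k) (b : A j) :
    U i (Function.update a j b) = U i a := by
  classical
  simp only [depSet, Finset.mem_filter, Finset.mem_univ, true_and, not_exists, not_not] at hj
  exact hj a b

lemma depSet_insensitive (U : Fin N → ((i : Fin N) → A i) → ℝ) (i : Fin N)
    (t : Finset (Fin N)) :
    ∀ b c : (j : Fin N) → A j, (∀ j, b j ≠ c j → j ∈ t) → (∀ j ∈ depSet U i, b j = c j) →
      U i b = U i c := by
  classical
  induction t using Finset.induction with
  | empty =>
    intro b c h1 _
    have : b = c := funext fun j => by_contra fun h => absurd (h1 j h) (Finset.notMem_empty j)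
    rw [this]
  | @insert j t hj ih =>
    intro b c h1 h2
    set b' := Function.update b j (c j) with hb'
    have key : U i b' = U i b := by
      by_cases hjd : j ∈ depSet U i
      · rw [hb', ← h2 j hjd, Function.update_eq_self]
      · exact not_mem_depSet hjd b (c j)
    have h1' : ∀ k, b' k ≠ c k → k ∈ t := by
      intro k hk
      by_cases hkj : k = j
      · subst hkj; simp [hb', Function.update_self] at hk
      · rw [hb', Function.update_of_ne hkj] at hk
        rcases Finset.mem_insert.mp (h1 k hk) with h | h
        · exact absurd h hkj
        · exact h
    have h2' : ∀ k ∈ depSet U i, b' k = c k := by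
      intro k hk
      by_cases hkj : k = j
      · subst hkj; simp [hb', Function.update_self]
      · rw [hb', Function.update_of_ne hkj]; exact h2 k hk
    rw [← key]
    exact ih b' c h1' h2'

lemma depSet_agree {U : Fin N → ((i : Fin N) → A i) → ℝ} {i : Fin N}
    {b c : (j : Fin N) → A j} (h : ∀ j ∈ depSet U i, b j = c j) : U i b = U i c :=
  depSet_insensitive U i Finset.univ b c (fun j _ => Finset.mem_univ j) h

end Aux

section Aux2

variable {N : ℕ} {A : Fin N → Type} [∀ i, Fintype (A i)] [∀ i, DecidableEq (A i)]
    [∀ i, Nonempty (A i)]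

variable (U : Fin N → ((i : Fin N) → A i) → ℝ) (𝒮 : Finset (Finset (Fin N)))

/-- Index type of cardinality `Dval U 𝒮`. -/
abbrev Idx : Type :=
  Σ S : {S : Finset (Fin N) // S ∈ 𝒮}, Σ i : {i : Fin N // i ∈ S.1},
    ((j : {j : Fin N // j ∈ S.1 ∩ depSet U i.1}) → A j.1)

lemma card_Idx : Fintype.card (Idx U 𝒮) = Dval U 𝒮 := by
  classical
  unfold Idx Dval
  simp only [Fintype.card_sigma, Fintype.card_pi]
  rw [← Finset.sum_coe_sort 𝒮 (fun S => ∑ i ∈ S, ∏ j ∈ S ∩ depSet U i, Fintype.card (A j))]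
  refine Finset.sum_congr rfl fun S _ => ?_
  rw [← Finset.sum_coe_sort S.1 (fun i => ∏ j ∈ S.1 ∩ depSet U i, Fintype.card (A j))]
  refine Finset.sum_congr rfl fun i _ => ?_
  rw [← Finset.prod_coe_sort (S.1 ∩ depSet U i.1) (fun j => Fintype.card (A j))]

/-- Extend a partial deviation on `S ∩ depSet U i` to a full profile. -/
noncomputable def extProf (S : Finset (Fin N)) (i : Fin N)
    (d : (j : {j : Fin N // j ∈ S ∩ depSet U i}) → A j.1) : (j : Fin N) → A j :=
  fun j => if h : j ∈ S ∩ depSet U i then d ⟨j, h⟩ else Classical.arbitrary _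

/-- Restrict a full deviation profile to `S ∩ depSet U i`. -/
def restr (S : Finset (Fin N)) (i : Fin N) (dev : (j : Fin N) → A j) :
    (j : {j : Fin N // j ∈ S ∩ depSet U i}) → A j.1 :=
  fun j => dev j.1

/-- The payoff-difference vector of a pure strategy. -/
noncomputable def phi (a : (j : Fin N) → A j) : Idx U 𝒮 → ℝ :=
  fun x => U x.2.1.1 (replaceProfile x.1.1 (extProf U x.1.1 x.2.1.1 x.2.2) a) - U x.2.1.1 a

lemma phi_restr (S : {S : Finset (Fin N) // S ∈ 𝒮}) (i : {i : Fin N // i ∈ S.1})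
    (dev a : (j : Fin N) → A j) :
    phi U 𝒮 a ⟨S, i, restr U S.1 i.1 dev⟩
      = U i.1 (replaceProfile S.1 dev a) - U i.1 a := by
  unfold phi
  have : U i.1 (replaceProfile S.1 (extProf U S.1 i.1 (restr U S.1 i.1 dev)) a)
      = U i.1 (replaceProfile S.1 dev a) := by
    refine depSet_agree fun j hj => ?_
    unfold replaceProfile
    by_cases hjS : j ∈ S.1
    · simp only [if_pos hjS]
      unfold extProf restr
      rw [dif_pos (Finset.mem_inter.mpr ⟨hjS, hj⟩)]
    · simp only [if_neg hjS]
  rw [this]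

lemma sum_phi_restr (S : {S : Finset (Fin N) // S ∈ 𝒮}) (dev : (j : Fin N) → A j)
    (π : ((j : Fin N) → A j) → ℝ) :
    ∑ i ∈ S.1, ∑ a, π a * (U i (replaceProfile S.1 dev a) - U i a)
      = ∑ i ∈ S.1.attach, ∑ a, π a * phi U 𝒮 a ⟨S, i, restr U S.1 i.1 dev⟩ := by
  rw [← Finset.sum_attach S.1
    (fun i => ∑ a, π a * (U i (replaceProfile S.1 dev a) - U i a))]
  refine Finset.sum_congr rfl fun i _ => Finset.sum_congr rfl fun a _ => ?_
  rw [phi_restr]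

lemma CE_eq_F (hG : ((𝒮.attach) ×ˢ (Finset.univ : Finset ((j : Fin N) → A j))).Nonempty)
    (π : ((j : Fin N) → A j) → ℝ) :
    CE U 𝒮 π = (𝒮.attach ×ˢ Finset.univ).sup' hG
      (fun p => ((p.1.1.card : ℝ))⁻¹ *
        ∑ i ∈ p.1.1.attach, ∑ a, π a * phi U 𝒮 a ⟨p.1, i, restr U p.1.1 i.1 p.2⟩) := by
  rw [Finset.sup'_eq_csSup_image]
  unfold CE
  congr 1
  ext x
  simp only [Set.mem_setOf_eq, Set.mem_image, Finset.mem_coe, Finset.mem_product,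
    Finset.mem_attach, Finset.mem_univ, and_self]
  constructor
  · rintro ⟨S, hS, dev, rfl⟩
    refine ⟨(⟨S, hS⟩, dev), trivial, ?_⟩
    dsimp only
    rw [sum_phi_restr U 𝒮 ⟨S, hS⟩ dev π]
  · rintro ⟨p, -, rfl⟩
    refine ⟨p.1.1, p.1.2, p.2, ?_⟩
    rw [sum_phi_restr U 𝒮 p.1 p.2 π]

end Aux2

set_option maxHeartbeats 1000000 in
/-- For every finite game, nonempty finite coalition family and `ε ≥ 0`, there is an
`ε`-MASE which is a convex combination of at most `D + 1` pure strategies. -/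
theorem stmt3 {N : ℕ} {A : Fin N → Type} [∀ i, Fintype (A i)] [∀ i, DecidableEq (A i)]
    [∀ i, Nonempty (A i)]
    (U : Fin N → ((i : Fin N) → A i) → ℝ) (hU : ∀ i a, U i a ∈ Set.Icc (0 : ℝ) 1)
    (𝒮 : Finset (Finset (Fin N))) (h𝒮ne : 𝒮.Nonempty) (h𝒮 : ∀ S ∈ 𝒮, S.Nonempty)
    (ε : ℝ) (hε : 0 ≤ ε) :
    ∃ (k : ℕ) (w : Fin k → ℝ) (acts : Fin k → ((i : Fin N) → A i)),
      k ≤ Dval U 𝒮 + 1 ∧ (∀ j, 0 ≤ w j) ∧ (∑ j, w j = 1) ∧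
      ∀ π', IsDist π' →
        CE U 𝒮 (fun a => ∑ j, w j * (if acts j = a then 1 else 0)) ≤ CE U 𝒮 π' + ε := by
  classical
  -- the nonempty index finset for the sup'
  have hG : ((𝒮.attach) ×ˢ (Finset.univ : Finset ((j : Fin N) → A j))).Nonempty := by
    obtain ⟨S, hS⟩ := h𝒮ne
    exact ⟨(⟨S, hS⟩, Classical.arbitrary _), by simp⟩
  -- F : the exploitability as a function of the payoff-difference vector
  set F : (Idx U 𝒮 → ℝ) → ℝ := fun v => (𝒮.attach ×ˢ Finset.univ).sup' hG
      (fun p => ((p.1.1.card : ℝ))⁻¹ *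
        ∑ i ∈ p.1.1.attach, v ⟨p.1, i, restr U p.1.1 i.1 p.2⟩) with hF
  have hCE : ∀ π : ((j : Fin N) → A j) → ℝ,
      CE U 𝒮 π = F (fun x => ∑ a, π a * phi U 𝒮 a x) := fun π => CE_eq_F U 𝒮 hG π
  have hFcont : Continuous F := by
    rw [hF]
    refine Continuous.finset_sup'_apply hG fun p _ => ?_
    exact continuous_const.mul (continuous_finset_sum _ fun i _ => continuous_apply _)
  -- minimize F over the convex hull of the range of phi
  set Φ : Set (Idx U 𝒮 → ℝ) := Set.range (phi U 𝒮) with hΦ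
  have hΦfin : Φ.Finite := Set.finite_range _
  have hΦne : Φ.Nonempty := ⟨phi U 𝒮 (Classical.arbitrary _), Set.mem_range_self _⟩
  have hKc : IsCompact (convexHull ℝ Φ) := hΦfin.isCompact_convexHull ℝ
  have hKne : (convexHull ℝ Φ).Nonempty := hΦne.mono (subset_convexHull ℝ Φ)
  obtain ⟨vstar, hvK, hmin0⟩ := hKc.exists_isMinOn hKne hFcont.continuousOn
  have hmin : ∀ u ∈ convexHull ℝ Φ, F vstar ≤ F u := isMinOn_iff.mp hmin0
  -- Carathéodory
  rw [convexHull_eq_union] at hvK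
  simp only [Set.mem_iUnion, exists_prop] at hvK
  obtain ⟨t, hts, hai, hvt⟩ := hvK
  have hcard : t.card ≤ Dval U 𝒮 + 1 := by
    have h1 := hai.card_le_finrank_succ (k := ℝ)
    have h2 : Module.finrank ℝ (vectorSpan ℝ (Set.range ((↑) : t → (Idx U 𝒮 → ℝ))))
        ≤ Module.finrank ℝ (Idx U 𝒮 → ℝ) := Submodule.finrank_le _
    have h3 : Module.finrank ℝ (Idx U 𝒮 → ℝ) = Dval U 𝒮 := by
      rw [Module.finrank_pi, card_Idx]
    rw [Fintype.card_coe] at h1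
    omega
  rw [Finset.mem_convexHull'] at hvt
  obtain ⟨w₀, hw₀, hw₀sum, hw₀eq⟩ := hvt
  -- enumerate t
  set k := t.card with hk
  set e : Fin k ≃ {x // x ∈ t} := t.equivFin.symm with he
  have hact : ∀ j : Fin k, ∃ a, phi U 𝒮 a = (e j : Idx U 𝒮 → ℝ) := fun j =>
    hts (e j).2
  choose acts hacts using hact
  refine ⟨k, fun j => w₀ (e j), acts, hcard, fun j => hw₀ _ (e j).2, ?_, ?_⟩
  · rw [← Finset.sum_coe_sort t w₀] at hw₀sum
    exact (Equiv.sum_comp e (fun y : {x // x ∈ t} => w₀ ↑y)).trans hw₀sum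
  · intro π' hπ'
    -- the mixed strategy built from the weights
    set π₀ : ((j : Fin N) → A j) → ℝ :=
      fun a => ∑ j, w₀ (e j) * (if acts j = a then 1 else 0) with hπ₀
    have hv₀ : (fun x => ∑ a, π₀ a * phi U 𝒮 a x) = vstar := by
      funext x
      have : ∀ a, π₀ a * phi U 𝒮 a x
          = ∑ j, w₀ (e j) * (if acts j = a then phi U 𝒮 a x else 0) := by
        intro a
        rw [hπ₀, Finset.sum_mul]
        refine Finset.sum_congr rfl fun j _ => ?_
        by_cases h : acts j = a <;> simp [h, mul_assoc]
      simp only [this]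
      rw [Finset.sum_comm]
      have : ∀ j, ∑ a, w₀ (e j) * (if acts j = a then phi U 𝒮 a x else 0)
          = w₀ (e j) * ((e j : Idx U 𝒮 → ℝ) x) := by
        intro j
        rw [← Finset.mul_sum]
        congr 1
        rw [Finset.sum_ite_eq (Finset.univ) (acts j) (fun a => phi U 𝒮 a x)]
        simp [hacts j]
      simp only [this]
      have := congrFun hw₀eq x
      rw [Finset.sum_apply] at this
      rw [← this, ← Finset.sum_coe_sort t (fun y => (w₀ y • y) x)]
      rw [← Equiv.sum_comp e (fun y : {x_1 // x_1 ∈ t} => (w₀ y • (y : Idx U 𝒮 → ℝ)) x)]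
      simp [smul_eq_mul]
    -- membership of the comparison strategy's vector
    have hv' : (fun x => ∑ a, π' a * phi U 𝒮 a x) ∈ convexHull ℝ Φ := by
      have : (fun x => ∑ a, π' a * phi U 𝒮 a x)
          = Finset.univ.centerMass π' (phi U 𝒮) := by
        rw [Finset.centerMass_eq_of_sum_1 _ _ hπ'.2]
        funext x
        rw [Finset.sum_apply]
        simp [smul_eq_mul]
      rw [this]
      exact Finset.centerMass_mem_convexHull _ (fun a _ => hπ'.1 a)
        (by rw [hπ'.2]; norm_num) (fun a _ => Set.mem_range_self a)
    have s1 : CE U 𝒮 π₀ = F vstar := by rw [hCE π₀, hv₀]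
    have s2 := hmin _ hv'
    have s4 : CE U 𝒮 π₀ ≤ CE U 𝒮 π' := by
      rw [s1, hCE π']
      exact s2
    exact s4.trans (le_add_of_nonneg_right hε)
end

section
/- For any finite game with utilities in [0,1] that possesses at least one (exact) coarse correlated equilibrium, the exploitability welfare frontier EWF : [0,1] → ℝ is (i) non-decreasing, (ii) concave, and (iii) piecewise linear: there exists a nonempty finite family of affine functions ε ↦ λ_k + m_k ε (k = 1, …, K) such that EWF(ε) = min_{1≤k≤K} (λ_k + m_k ε) for all ε ∈ [0,1]. -/
open Finset

/-- The exploitability of a joint strategy: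
`max_{i} max_{â_i ∈ 𝒜_i} E_{a∼π}[𝒰_i(â_i, a_{−i}) − 𝒰_i(a)]`. -/
noncomputable def expl {N : ℕ} {A : Fin N → Type} [∀ i, Fintype (A i)] [∀ i, DecidableEq (A i)]
    (U : Fin N → ((i : Fin N) → A i) → ℝ) (π : ((i : Fin N) → A i) → ℝ) : ℝ :=
  sSup {x | ∃ (i : Fin N) (b : A i),
    x = ∑ a, π a * (U i (Function.update a i b) - U i a)}

/-- Social welfare: the sum of all players' expected utilities. -/
noncomputable def SW {N : ℕ} {A : Fin N → Type} [∀ i, Fintype (A i)]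
    (U : Fin N → ((i : Fin N) → A i) → ℝ) (π : ((i : Fin N) → A i) → ℝ) : ℝ :=
  ∑ i, ∑ a, π a * U i a

/-- The exploitability welfare frontier: the maximum social welfare over all `ε`-CCEs. -/
noncomputable def EWF {N : ℕ} {A : Fin N → Type} [∀ i, Fintype (A i)] [∀ i, DecidableEq (A i)]
    (U : Fin N → ((i : Fin N) → A i) → ℝ) (ε : ℝ) : ℝ :=
  sSup {x | ∃ π, IsDist π ∧ expl U π ≤ ε ∧ x = SW U π}

/-! ### Auxiliary material: Fourier–Motzkin elimination -/

/-- An affine function on `ℝ²` given by coefficients `(p, q, r) ↦ p·ε + q·w + r`. -/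
def aff (c : ℝ × ℝ × ℝ) (x : ℝ × ℝ) : ℝ := c.1 * x.1 + c.2.1 * x.2 + c.2.2

lemma aff_combine (a b : ℝ) (u v : ℝ × ℝ × ℝ) (x : ℝ × ℝ) :
    aff (a • u - b • v) x = a * aff u x - b * aff v x := by
  simp [aff, Prod.smul_fst, Prod.smul_snd, smul_eq_mul]
  ring

/-- Fourier–Motzkin elimination: the projection onto `ℝ²` of a finite system of
linear inequalities in variables `ℝⁿ × ℝ²` is again a finite system of linear
inequalities on `ℝ²`. -/
lemma FM (n : ℕ) : ∀ (K : Type) [Fintype K] (A : K → Fin n → ℝ) (c : K → ℝ × ℝ × ℝ),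
    ∃ (K' : Type) (_ : Fintype K') (c' : K' → ℝ × ℝ × ℝ),
      ∀ x : ℝ × ℝ,
        (∃ l : Fin n → ℝ, ∀ k, ∑ i, A k i * l i ≤ aff (c k) x) ↔
          ∀ k', 0 ≤ aff (c' k') x := by
  induction n with
  | zero =>
    intro K _ A c
    refine ⟨K, ‹_›, fun k => c k, fun x => ?_⟩
    constructor
    · rintro ⟨l, hl⟩ k
      simpa using hl k
    · intro h
      exact ⟨fun i => 0, fun k => by simpa using h k⟩
  | succ n ih =>
    intro K _ A c
    classical
    set t : K → ℝ := fun k => A k (Fin.last n) with ht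
    set B : K × K → Fin n → ℝ := fun p i =>
      if 0 < t p.1 ∧ t p.2 < 0 then
        t p.1 * A p.2 i.castSucc - t p.2 * A p.1 i.castSucc
      else if p.1 = p.2 ∧ t p.1 = 0 then A p.1 i.castSucc
      else 0 with hB
    set d : K × K → ℝ × ℝ × ℝ := fun p =>
      if 0 < t p.1 ∧ t p.2 < 0 then t p.1 • c p.2 - t p.2 • c p.1
      else if p.1 = p.2 ∧ t p.1 = 0 then c p.1
      else 0 with hd
    obtain ⟨K', fK', c', hc'⟩ := ih (K × K) B d
    refine ⟨K', fK', c', fun x => ?_⟩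
    rw [← hc' x]
    have hexp : ∀ (a b : ℝ) (f g : Fin n → ℝ) (l : Fin n → ℝ),
        ∑ i, (a * f i - b * g i) * l i
          = a * ∑ i, f i * l i - b * ∑ i, g i * l i := by
      intro a b f g l
      rw [Finset.mul_sum, Finset.mul_sum, ← Finset.sum_sub_distrib]
      exact Finset.sum_congr rfl fun i _ => by ring
    constructor
    · rintro ⟨l, hl⟩
      refine ⟨fun i => l i.castSucc, fun p => ?_⟩
      by_cases h1 : 0 < t p.1 ∧ t p.2 < 0
      · have e1 := hl p.1
        have e2 := hl p.2
        rw [Fin.sum_univ_castSucc] at e1 e2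
        simp only [hB, hd, if_pos h1]
        rw [hexp, aff_combine]
        have h5 : t p.1 * (∑ i : Fin n, A p.2 i.castSucc * l i.castSucc + t p.2 * l (Fin.last n))
            ≤ t p.1 * aff (c p.2) x := mul_le_mul_of_nonneg_left e2 h1.1.le
        have h6 : t p.2 * aff (c p.1) x
            ≤ t p.2 * (∑ i : Fin n, A p.1 i.castSucc * l i.castSucc + t p.1 * l (Fin.last n)) :=
          mul_le_mul_of_nonpos_left e1 h1.2.le
        nlinarith [h5, h6]
      · by_cases h2 : p.1 = p.2 ∧ t p.1 = 0
        · have e1 := hl p.1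
          rw [Fin.sum_univ_castSucc] at e1
          simp only [hB, hd, if_neg h1, if_pos h2]
          have htk : A p.1 (Fin.last n) = t p.1 := rfl
          rw [htk, h2.2, zero_mul, add_zero] at e1
          exact e1
        · simp only [hB, hd, if_neg h1, if_neg h2]
          simp [aff]
    · rintro ⟨l', hl'⟩
      set R : K → ℝ := fun k => aff (c k) x - ∑ i : Fin n, A k i.castSucc * l' i with hR
      have hpair : ∀ j k, 0 < t j → t k < 0 → t k * R j ≤ t j * R k := by
        intro j k hj hk
        have h := hl' (j, k)
        simp only [hB, hd, if_pos (show 0 < t j ∧ t k < 0 from ⟨hj, hk⟩)] at h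
        rw [hexp, aff_combine] at h
        simp only [hR]
        nlinarith [h]
      have hzero : ∀ k, t k = 0 → 0 ≤ R k := by
        intro k hk
        have h := hl' (k, k)
        simp [hB, hd, hk] at h
        simp only [hR]
        linarith [h]
      set Pos : Finset K := univ.filter (fun k => 0 < t k) with hPos
      set Neg : Finset K := univ.filter (fun k => t k < 0) with hNeg
      set y : ℝ :=
        if hp : Pos.Nonempty then Pos.inf' hp (fun k => R k / t k)
        else if hn : Neg.Nonempty then Neg.sup' hn (fun k => R k / t k)
        else 0 with hy
      have key : ∀ k, t k * y ≤ R k := by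
        intro k
        rcases lt_trichotomy (t k) 0 with hneg | hz | hpos
        · by_cases hp : Pos.Nonempty
          · simp only [hy, dif_pos hp]
            obtain ⟨j, hjmem, hjeq⟩ := Finset.exists_mem_eq_inf' hp (fun k => R k / t k)
            have hjpos : 0 < t j := (Finset.mem_filter.mp hjmem).2
            rw [hjeq]
            have hp2 := hpair j k hjpos hneg
            rw [mul_div_assoc']
            rw [div_le_iff₀ hjpos]
            nlinarith [hp2]
          · have hn : Neg.Nonempty := ⟨k, Finset.mem_filter.mpr ⟨Finset.mem_univ _, hneg⟩⟩
            simp only [hy, dif_neg hp, dif_pos hn]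
            have hle : R k / t k ≤ Neg.sup' hn (fun k => R k / t k) :=
              Finset.le_sup' (f := fun k => R k / t k)
                (Finset.mem_filter.mpr ⟨Finset.mem_univ k, hneg⟩)
            have := mul_le_mul_of_nonpos_left hle hneg.le
            calc t k * Neg.sup' hn (fun k => R k / t k) ≤ t k * (R k / t k) := this
              _ = R k := by rw [mul_comm, div_mul_cancel₀ _ (ne_of_lt hneg)]
        · rw [hz, zero_mul]; exact hzero k hz
        · have hp : Pos.Nonempty := ⟨k, Finset.mem_filter.mpr ⟨Finset.mem_univ _, hpos⟩⟩
          simp only [hy, dif_pos hp]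
          have hle : Pos.inf' hp (fun k => R k / t k) ≤ R k / t k :=
            Finset.inf'_le (f := fun k => R k / t k)
              (Finset.mem_filter.mpr ⟨Finset.mem_univ k, hpos⟩)
          calc t k * Pos.inf' hp (fun k => R k / t k) ≤ t k * (R k / t k) :=
                mul_le_mul_of_nonneg_left hle hpos.le
            _ = R k := by rw [mul_comm, div_mul_cancel₀ _ (ne_of_gt hpos)]
      refine ⟨Fin.snoc l' y, fun k => ?_⟩
      rw [Fin.sum_univ_castSucc]
      simp only [Fin.snoc_castSucc, Fin.snoc_last]
      have hthis := key k
      simp only [hR] at hthis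
      have htk : A k (Fin.last n) = t k := rfl
      rw [htk]
      linarith [hthis]

/-! ### Auxiliary lemmas about the game quantities -/

section Helpers

variable {N : ℕ} {A : Fin N → Type} [∀ i, Fintype (A i)] [∀ i, DecidableEq (A i)]

lemma explSet_bddAbove (U : Fin N → ((i : Fin N) → A i) → ℝ)
    (hU : ∀ i a, U i a ∈ Set.Icc (0 : ℝ) 1) (π : ((i : Fin N) → A i) → ℝ) (hπ : IsDist π) :
    BddAbove {x | ∃ (i : Fin N) (b : A i),
      x = ∑ a, π a * (U i (Function.update a i b) - U i a)} := by
  refine ⟨1, ?_⟩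
  rintro x ⟨i, b, rfl⟩
  calc ∑ a, π a * (U i (Function.update a i b) - U i a) ≤ ∑ a, π a * 1 := by
        refine Finset.sum_le_sum fun a _ => mul_le_mul_of_nonneg_left ?_ (hπ.1 a)
        have h1 := (hU i (Function.update a i b)).2
        have h2 := (hU i a).1
        linarith
    _ = 1 := by simp [hπ.2]

lemma D_le_expl (U : Fin N → ((i : Fin N) → A i) → ℝ)
    (hU : ∀ i a, U i a ∈ Set.Icc (0 : ℝ) 1) (π : ((i : Fin N) → A i) → ℝ) (hπ : IsDist π)
    (i : Fin N) (b : A i) :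
    ∑ a, π a * (U i (Function.update a i b) - U i a) ≤ expl U π :=
  le_csSup (explSet_bddAbove U hU π hπ) ⟨i, b, rfl⟩

lemma expl_le (U : Fin N → ((i : Fin N) → A i) → ℝ) (π : ((i : Fin N) → A i) → ℝ)
    {ε : ℝ} (hε : 0 ≤ ε)
    (h : ∀ (i : Fin N) (b : A i), ∑ a, π a * (U i (Function.update a i b) - U i a) ≤ ε) :
    expl U π ≤ ε :=
  Real.sSup_le (by rintro x ⟨i, b, rfl⟩; exact h i b) hε

lemma SW_le_N (U : Fin N → ((i : Fin N) → A i) → ℝ)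
    (hU : ∀ i a, U i a ∈ Set.Icc (0 : ℝ) 1) (π : ((i : Fin N) → A i) → ℝ) (hπ : IsDist π) :
    SW U π ≤ N := by
  calc SW U π ≤ ∑ _i : Fin N, ∑ a, π a * 1 :=
        Finset.sum_le_sum fun i _ => Finset.sum_le_sum fun a _ =>
          mul_le_mul_of_nonneg_left (hU i a).2 (hπ.1 a)
    _ = N := by simp [hπ.2]

lemma SW_eq (U : Fin N → ((i : Fin N) → A i) → ℝ) (π : ((i : Fin N) → A i) → ℝ) :
    SW U π = ∑ a, (∑ i, U i a) * π a := by
  rw [SW, Finset.sum_comm]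
  exact Finset.sum_congr rfl fun a _ => by rw [← Finset.mul_sum, mul_comm]

lemma sum_indicator_neg {X : Type*} [Fintype X] [DecidableEq X] (π : X → ℝ) (a₀ : X) :
    ∑ a, (if a = a₀ then (-1 : ℝ) else 0) * π a = -π a₀ := by
  rw [Finset.sum_congr rfl
    (fun a _ => (by split_ifs <;> ring : (if a = a₀ then (-1:ℝ) else 0) * π a
      = if a = a₀ then -π a else 0))]
  rw [Finset.sum_ite_eq' Finset.univ a₀ fun a => -π a]
  simp

lemma sum_neg_fun {X : Type*} [Fintype X] (g π : X → ℝ) :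
    ∑ a, (-(g a)) * π a = -∑ a, g a * π a := by
  rw [← Finset.sum_neg_distrib]
  exact Finset.sum_congr rfl fun a _ => by ring

/-- Constraint index type for the `ε`-CCE/welfare system. -/
abbrev CIdx (N : ℕ) (A : Fin N → Type) : Type :=
  (Σ i : Fin N, A i) ⊕ (((i : Fin N) → A i) ⊕ (Unit ⊕ (Unit ⊕ (Unit ⊕ (Unit ⊕ Unit)))))

/-- Coefficient matrix of the `ε`-CCE/welfare system. -/
noncomputable def cceA (U : Fin N → ((i : Fin N) → A i) → ℝ) :
    CIdx N A → ((i : Fin N) → A i) → ℝ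
  | Sum.inl s => fun a => U s.1 (Function.update a s.1 s.2) - U s.1 a
  | Sum.inr (Sum.inl a₀) => fun a => if a = a₀ then -1 else 0
  | Sum.inr (Sum.inr (Sum.inl _)) => fun _ => 1
  | Sum.inr (Sum.inr (Sum.inr (Sum.inl _))) => fun _ => -1
  | Sum.inr (Sum.inr (Sum.inr (Sum.inr (Sum.inl _)))) => fun a => ∑ i, U i a
  | Sum.inr (Sum.inr (Sum.inr (Sum.inr (Sum.inr (Sum.inl _))))) => fun a => -(∑ i, U i a)
  | Sum.inr (Sum.inr (Sum.inr (Sum.inr (Sum.inr (Sum.inr _))))) => fun _ => 0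

/-- Affine right-hand sides of the `ε`-CCE/welfare system. -/
def cceC {N : ℕ} {A : Fin N → Type} : CIdx N A → ℝ × ℝ × ℝ
  | Sum.inl _ => (1, 0, 0)
  | Sum.inr (Sum.inl _) => (0, 0, 0)
  | Sum.inr (Sum.inr (Sum.inl _)) => (0, 0, 1)
  | Sum.inr (Sum.inr (Sum.inr (Sum.inl _))) => (0, 0, -1)
  | Sum.inr (Sum.inr (Sum.inr (Sum.inr (Sum.inl _)))) => (0, 1, 0)
  | Sum.inr (Sum.inr (Sum.inr (Sum.inr (Sum.inr (Sum.inl _))))) => (0, -1, 0)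
  | Sum.inr (Sum.inr (Sum.inr (Sum.inr (Sum.inr (Sum.inr _))))) => (1, 0, 0)

/-- The set of pairs `(exploitability bound, social welfare)` achievable by distributions
is cut out by finitely many affine inequalities. -/
lemma main_equiv (U : Fin N → ((i : Fin N) → A i) → ℝ)
    (hU : ∀ i a, U i a ∈ Set.Icc (0 : ℝ) 1) :
    ∃ (M : ℕ) (cc : Fin M → ℝ × ℝ × ℝ), ∀ ε w : ℝ, 0 ≤ ε →
      ((∃ π, IsDist π ∧ expl U π ≤ ε ∧ w = SW U π) ↔ ∀ k, 0 ≤ aff (cc k) (ε, w)) := by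
  classical
  obtain ⟨K', fK', c', hFM⟩ :=
    FM (Fintype.card ((i : Fin N) → A i)) (CIdx N A)
      (fun k i => cceA U k ((Fintype.equivFin ((i : Fin N) → A i)).symm i))
      (cceC (N := N) (A := A))
  refine ⟨Fintype.card K', fun k => c' ((Fintype.equivFin K').symm k), fun ε w hε => ?_⟩
  have hKiff : (∀ k : Fin (Fintype.card K'),
        0 ≤ aff (c' ((Fintype.equivFin K').symm k)) (ε, w))
      ↔ ∀ k' : K', 0 ≤ aff (c' k') (ε, w) := by
    constructor
    · intro h k'; simpa using h ((Fintype.equivFin K') k')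
    · intro h k; exact h _
  rw [hKiff, ← hFM (ε, w)]
  set eV := Fintype.equivFin ((i : Fin N) → A i) with heV
  have hsum : ∀ g π : ((i : Fin N) → A i) → ℝ,
      ∑ i, g (eV.symm i) * π (eV.symm i) = ∑ a, g a * π a :=
    fun g π => Equiv.sum_comp eV.symm (fun a => g a * π a)
  constructor
  · rintro ⟨π, hπ, hexpl, hw⟩
    refine ⟨fun i => π (eV.symm i), fun k => ?_⟩
    show ∑ i, cceA U k (eV.symm i) * π (eV.symm i) ≤ aff (cceC k) (ε, w)
    rw [hsum (cceA U k) π]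
    rcases k with ⟨i, b⟩ | a₀ | u | u | u | u | u
    · simp only [cceA, cceC]
      rw [show aff ((1:ℝ), (0:ℝ), (0:ℝ)) (ε, w) = ε by simp [aff]]
      rw [Finset.sum_congr rfl
        (fun a _ => mul_comm (U i (Function.update a i b) - U i a) (π a))]
      exact (D_le_expl U hU π hπ i b).trans hexpl
    · simp only [cceA, cceC]
      rw [sum_indicator_neg, show aff ((0:ℝ), (0:ℝ), (0:ℝ)) (ε, w) = 0 by simp [aff]]
      linarith [hπ.1 a₀]
    · simp only [cceA, cceC, one_mul]
      rw [hπ.2, show aff ((0:ℝ), (0:ℝ), (1:ℝ)) (ε, w) = 1 by simp [aff]]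
    · simp only [cceA, cceC]
      rw [show ∑ a, (-1:ℝ) * π a = -∑ a, (1:ℝ) * π a from sum_neg_fun (fun _ => 1) π]
      simp only [one_mul]
      rw [hπ.2, show aff ((0:ℝ), (0:ℝ), (-1:ℝ)) (ε, w) = -1 by simp [aff]]
    · simp only [cceA, cceC]
      rw [← SW_eq U π, show aff ((0:ℝ), (1:ℝ), (0:ℝ)) (ε, w) = w by simp [aff], hw]
    · simp only [cceA, cceC]
      rw [sum_neg_fun (fun a => ∑ i, U i a) π, ← SW_eq U π,
        show aff ((0:ℝ), (-1:ℝ), (0:ℝ)) (ε, w) = -w by simp [aff], hw]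
    · simp only [cceA, cceC, zero_mul, Finset.sum_const_zero]
      rw [show aff ((1:ℝ), (0:ℝ), (0:ℝ)) (ε, w) = ε by simp [aff]]
      exact hε
  · rintro ⟨l, hl⟩
    set π : ((i : Fin N) → A i) → ℝ := fun a => l (eV a) with hπdef
    have hconv : ∀ k, ∑ a, cceA U k a * π a ≤ aff (cceC k) (ε, w) := by
      intro k
      have h := hl k
      rw [← hsum (cceA U k) π]
      calc ∑ i, cceA U k (eV.symm i) * π (eV.symm i)
          = ∑ i, cceA U k (eV.symm i) * l i := by
            refine Finset.sum_congr rfl fun i _ => ?_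
            simp [hπdef]
        _ ≤ _ := h
    have hnn : ∀ a₀, 0 ≤ π a₀ := by
      intro a₀
      have h := hconv (Sum.inr (Sum.inl a₀))
      simp only [cceA, cceC] at h
      rw [sum_indicator_neg, show aff ((0:ℝ), (0:ℝ), (0:ℝ)) (ε, w) = 0 by simp [aff]] at h
      linarith
    have hsum1 : ∑ a, π a ≤ 1 := by
      have h := hconv (Sum.inr (Sum.inr (Sum.inl ())))
      simp only [cceA, cceC, one_mul] at h
      rw [show aff ((0:ℝ), (0:ℝ), (1:ℝ)) (ε, w) = 1 by simp [aff]] at h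
      exact h
    have hsum2 : (1:ℝ) ≤ ∑ a, π a := by
      have h := hconv (Sum.inr (Sum.inr (Sum.inr (Sum.inl ()))))
      simp only [cceA, cceC] at h
      rw [show ∑ a, (-1:ℝ) * π a = -∑ a, (1:ℝ) * π a from sum_neg_fun (fun _ => 1) π,
        show aff ((0:ℝ), (0:ℝ), (-1:ℝ)) (ε, w) = -1 by simp [aff]] at h
      simp only [one_mul] at h
      linarith
    have hdist : IsDist π := ⟨hnn, le_antisymm hsum1 hsum2⟩
    have hswle : SW U π ≤ w := by
      have h := hconv (Sum.inr (Sum.inr (Sum.inr (Sum.inr (Sum.inl ())))))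
      simp only [cceA, cceC] at h
      rw [← SW_eq U π, show aff ((0:ℝ), (1:ℝ), (0:ℝ)) (ε, w) = w by simp [aff]] at h
      exact h
    have hswge : w ≤ SW U π := by
      have h := hconv (Sum.inr (Sum.inr (Sum.inr (Sum.inr (Sum.inr (Sum.inl ()))))))
      simp only [cceA, cceC] at h
      rw [sum_neg_fun (fun a => ∑ i, U i a) π, ← SW_eq U π,
        show aff ((0:ℝ), (-1:ℝ), (0:ℝ)) (ε, w) = -w by simp [aff]] at h
      linarith
    have hdev : ∀ (i : Fin N) (b : A i),
        ∑ a, π a * (U i (Function.update a i b) - U i a) ≤ ε := by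
      intro i b
      have h := hconv (Sum.inl ⟨i, b⟩)
      simp only [cceA, cceC] at h
      rw [show aff ((1:ℝ), (0:ℝ), (0:ℝ)) (ε, w) = ε by simp [aff]] at h
      calc ∑ a, π a * (U i (Function.update a i b) - U i a)
          = ∑ a, (U i (Function.update a i b) - U i a) * π a :=
            Finset.sum_congr rfl fun a _ => mul_comm _ _
        _ ≤ ε := h
    exact ⟨π, hdist, expl_le U π hε hdev, le_antisymm hswge hswle⟩

end Helpers

/-- For any finite game with utilities in `[0,1]` possessing a CCE, the exploitability
welfare frontier is non-decreasing, concave, and piecewise linear on `[0,1]`: it is the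
pointwise minimum of finitely many affine functions. -/
theorem stmt6 {N : ℕ} {A : Fin N → Type} [∀ i, Fintype (A i)] [∀ i, DecidableEq (A i)]
    [∀ i, Nonempty (A i)]
    (U : Fin N → ((i : Fin N) → A i) → ℝ) (hU : ∀ i a, U i a ∈ Set.Icc (0 : ℝ) 1)
    (hCCE : ∃ π, IsDist π ∧ expl U π ≤ 0) :
    (∀ ε₁ ε₂, ε₁ ∈ Set.Icc (0 : ℝ) 1 → ε₂ ∈ Set.Icc (0 : ℝ) 1 → ε₁ ≤ ε₂ →
      EWF U ε₁ ≤ EWF U ε₂) ∧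
    (∀ ε₁ ε₂ t, ε₁ ∈ Set.Icc (0 : ℝ) 1 → ε₂ ∈ Set.Icc (0 : ℝ) 1 → t ∈ Set.Icc (0 : ℝ) 1 →
      t * EWF U ε₁ + (1 - t) * EWF U ε₂ ≤ EWF U (t * ε₁ + (1 - t) * ε₂)) ∧
    (∃ (K : ℕ) (lam m : Fin (K + 1) → ℝ),
      ∀ ε ∈ Set.Icc (0 : ℝ) 1,
        EWF U ε = Finset.univ.inf' Finset.univ_nonempty (fun k => lam k + m k * ε)) := by
  classical
  obtain ⟨π₀, hπ₀, hexp₀⟩ := hCCE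
  set S : ℝ → Set ℝ := fun ε => {x | ∃ π, IsDist π ∧ expl U π ≤ ε ∧ x = SW U π} with hS
  have hEWFdef : ∀ ε, EWF U ε = sSup (S ε) := fun ε => rfl
  have hbdd : ∀ ε, BddAbove (S ε) := by
    intro ε
    refine ⟨N, ?_⟩
    rintro x ⟨π, hπ, _, rfl⟩
    exact SW_le_N U hU π hπ
  have hne : ∀ ε, 0 ≤ ε → (S ε).Nonempty := fun ε hε =>
    ⟨SW U π₀, π₀, hπ₀, hexp₀.trans hε, rfl⟩
  refine ⟨?_, ?_, ?_⟩
  · -- monotone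
    intro ε₁ ε₂ h1 h2 hle
    rw [hEWFdef, hEWFdef]
    refine csSup_le_csSup (hbdd ε₂) (hne ε₁ h1.1) ?_
    rintro x ⟨π, hπ, hexpl, rfl⟩
    exact ⟨π, hπ, hexpl.trans hle, rfl⟩
  · -- concave
    intro ε₁ ε₂ t h1 h2 htI
    have h1t : 0 ≤ 1 - t := by linarith [htI.2]
    have ht0 : 0 ≤ t := htI.1
    have hmixε : 0 ≤ t * ε₁ + (1 - t) * ε₂ := by
      have := mul_nonneg ht0 h1.1
      have := mul_nonneg h1t h2.1
      linarith
    have hmix : ∀ x₁ ∈ S ε₁, ∀ x₂ ∈ S ε₂,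
        t * x₁ + (1 - t) * x₂ ∈ S (t * ε₁ + (1 - t) * ε₂) := by
      rintro x₁ ⟨π₁, hπ₁, he₁, rfl⟩ x₂ ⟨π₂, hπ₂, he₂, rfl⟩
      refine ⟨fun a => t * π₁ a + (1 - t) * π₂ a, ⟨?_, ?_⟩, ?_, ?_⟩
      · intro a
        have ha1 := hπ₁.1 a; have ha2 := hπ₂.1 a
        have := mul_nonneg ht0 ha1
        have := mul_nonneg h1t ha2
        show 0 ≤ t * π₁ a + (1 - t) * π₂ a
        linarith
      · rw [Finset.sum_add_distrib, ← Finset.mul_sum, ← Finset.mul_sum, hπ₁.2, hπ₂.2]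
        ring
      · refine expl_le U _ hmixε ?_
        intro i b
        have hlin : ∑ a, (t * π₁ a + (1 - t) * π₂ a) * (U i (Function.update a i b) - U i a)
            = t * ∑ a, π₁ a * (U i (Function.update a i b) - U i a)
              + (1 - t) * ∑ a, π₂ a * (U i (Function.update a i b) - U i a) := by
          rw [Finset.mul_sum, Finset.mul_sum, ← Finset.sum_add_distrib]
          exact Finset.sum_congr rfl fun a _ => by ring
        rw [hlin]
        have hd1 : ∑ a, π₁ a * (U i (Function.update a i b) - U i a) ≤ ε₁ :=
          (D_le_expl U hU π₁ hπ₁ i b).trans he₁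
        have hd2 : ∑ a, π₂ a * (U i (Function.update a i b) - U i a) ≤ ε₂ :=
          (D_le_expl U hU π₂ hπ₂ i b).trans he₂
        exact add_le_add (mul_le_mul_of_nonneg_left hd1 ht0)
          (mul_le_mul_of_nonneg_left hd2 h1t)
      · have : SW U (fun a => t * π₁ a + (1 - t) * π₂ a)
            = t * SW U π₁ + (1 - t) * SW U π₂ := by
          unfold SW
          rw [Finset.mul_sum, Finset.mul_sum, ← Finset.sum_add_distrib]
          refine Finset.sum_congr rfl fun i _ => ?_
          rw [Finset.mul_sum, Finset.mul_sum, ← Finset.sum_add_distrib]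
          exact Finset.sum_congr rfl fun a _ => by ring
        exact this.symm
    rcases eq_or_lt_of_le ht0 with ht0' | ht0'
    · rw [hEWFdef, hEWFdef, hEWFdef, ← ht0']
      norm_num
    rcases eq_or_lt_of_le htI.2 with ht1' | ht1'
    · rw [hEWFdef, hEWFdef, hEWFdef, ht1']
      norm_num
    have h1t' : 0 < 1 - t := by linarith
    rw [hEWFdef, hEWFdef, hEWFdef]
    have hub : ∀ x₁ ∈ S ε₁, ∀ x₂ ∈ S ε₂,
        t * x₁ + (1 - t) * x₂ ≤ sSup (S (t * ε₁ + (1 - t) * ε₂)) :=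
      fun x₁ hx₁ x₂ hx₂ => le_csSup (hbdd _) (hmix x₁ hx₁ x₂ hx₂)
    have hA : sSup (S ε₁) ≤ (sSup (S (t * ε₁ + (1 - t) * ε₂)) - (1 - t) * sSup (S ε₂)) / t := by
      refine csSup_le (hne ε₁ h1.1) ?_
      intro x₁ hx₁
      rw [le_div_iff₀ ht0']
      have hB : sSup (S ε₂) ≤ (sSup (S (t * ε₁ + (1 - t) * ε₂)) - t * x₁) / (1 - t) := by
        refine csSup_le (hne ε₂ h2.1) ?_
        intro x₂ hx₂
        rw [le_div_iff₀ h1t']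
        have := hub x₁ hx₁ x₂ hx₂
        linarith
      have := (le_div_iff₀ h1t').mp hB
      linarith
    have := (le_div_iff₀ ht0').mp hA
    linarith
  · -- piecewise linear
    obtain ⟨M, cc, hcc⟩ := main_equiv U hU
    set p : Fin M → ℝ := fun k => (cc k).1 with hp
    set q : Fin M → ℝ := fun k => (cc k).2.1 with hq
    set r : Fin M → ℝ := fun k => (cc k).2.2 with hr
    have haff : ∀ (k : Fin M) (ε w : ℝ), aff (cc k) (ε, w) = p k * ε + q k * w + r k :=
      fun _ _ _ => rfl
    set F : Finset (Fin M) := univ.filter (fun k => q k < 0) with hFdef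
    have hF : F.Nonempty := by
      by_contra hFe
      rw [Finset.not_nonempty_iff_eq_empty] at hFe
      have hqpos : ∀ k, 0 ≤ q k := by
        intro k
        by_contra hk
        push_neg at hk
        have : k ∈ F := Finset.mem_filter.mpr ⟨Finset.mem_univ _, hk⟩
        rw [hFe] at this
        exact absurd this (Finset.notMem_empty _)
      set w₀ := SW U π₀ with hw₀def
      have h0 : ∀ k, 0 ≤ aff (cc k) (0, w₀) :=
        (hcc 0 w₀ le_rfl).mp ⟨π₀, hπ₀, hexp₀, rfl⟩
      set W := max w₀ ((N : ℝ) + 1) with hWdef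
      have hW : ∀ k, 0 ≤ aff (cc k) (0, W) := by
        intro k
        have hk0 := h0 k
        rw [haff] at hk0 ⊢
        nlinarith [mul_nonneg (hqpos k) (sub_nonneg.mpr (le_max_left w₀ ((N : ℝ) + 1)))]
      obtain ⟨π', hπ', _, hw'⟩ := (hcc 0 W le_rfl).mpr hW
      have hWN : W ≤ N := hw' ▸ SW_le_N U hU π' hπ'
      have : (N : ℝ) + 1 ≤ W := le_max_right _ _
      linarith
    obtain ⟨K, hK⟩ : ∃ K, F.card = K + 1 :=
      ⟨F.card - 1, (Nat.succ_pred_eq_of_pos (Finset.card_pos.mpr hF)).symm⟩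
    set e : Fin (K + 1) → Fin M := fun k => ((F.orderIsoOfFin hK k : {x // x ∈ F}) : Fin M)
      with hedef
    have he : ∀ k, e k ∈ F := fun k => (F.orderIsoOfFin hK k).2
    have hesurj : ∀ j ∈ F, ∃ k, e k = j := by
      intro j hj
      refine ⟨(F.orderIsoOfFin hK).symm ⟨j, hj⟩, ?_⟩
      show ((F.orderIsoOfFin hK) ((F.orderIsoOfFin hK).symm ⟨j, hj⟩) : Fin M) = j
      rw [OrderIso.apply_symm_apply]
    refine ⟨K, fun k => r (e k) / (-(q (e k))), fun k => p (e k) / (-(q (e k))), ?_⟩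
    intro ε hε
    set Sl : Set ℝ := {w | ∀ k, 0 ≤ aff (cc k) (ε, w)} with hSl
    have hEWF : EWF U ε = sSup Sl := by
      rw [hEWFdef]
      congr 1
      ext w
      exact hcc ε w hε.1
    set φ : Fin M → ℝ := fun k => (r k + p k * ε) / (-(q k)) with hφ
    have hw₀ : SW U π₀ ∈ Sl := (hcc ε (SW U π₀) hε.1).mp ⟨π₀, hπ₀, hexp₀.trans hε.1, rfl⟩
    have hub : ∀ w ∈ Sl, ∀ k ∈ F, w ≤ φ k := by
      intro w hw k hk
      have hqk : q k < 0 := (Finset.mem_filter.mp hk).2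
      have h := hw k
      rw [haff] at h
      rw [hφ]
      rw [le_div_iff₀ (by linarith : (0:ℝ) < -q k)]
      nlinarith [h]
    have hub' : ∀ w ∈ Sl, w ≤ F.inf' hF φ := fun w hw =>
      Finset.le_inf' hF φ (fun k hk => hub w hw k hk)
    have hmem : F.inf' hF φ ∈ Sl := by
      intro k
      rw [haff]
      rcases lt_trichotomy (q k) 0 with hq0 | hq0 | hq0
      · have hle : F.inf' hF φ ≤ (r k + p k * ε) / (-q k) :=
          Finset.inf'_le φ (Finset.mem_filter.mpr ⟨Finset.mem_univ _, hq0⟩)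
        have hthis := (le_div_iff₀ (show (0:ℝ) < -q k by linarith)).mp hle
        nlinarith [hthis]
      · have h := hw₀ k
        rw [haff] at h
        rw [hq0] at h ⊢
        rw [zero_mul] at h ⊢
        linarith
      · have h := hw₀ k
        rw [haff] at h
        have hle : SW U π₀ ≤ F.inf' hF φ := hub' _ hw₀
        nlinarith [mul_le_mul_of_nonneg_left hle hq0.le]
    have hsup : sSup Sl = F.inf' hF φ :=
      le_antisymm (csSup_le ⟨_, hw₀⟩ hub') (le_csSup ⟨_, fun w hw => hub' w hw⟩ hmem)
    rw [hEWF, hsup]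
    have hval : ∀ k : Fin (K + 1),
        r (e k) / (-(q (e k))) + p (e k) / (-(q (e k))) * ε = φ (e k) := by
      intro k
      rw [hφ, div_mul_eq_mul_div, ← add_div]
    apply le_antisymm
    · apply Finset.le_inf'
      intro k _
      calc F.inf' hF φ ≤ φ (e k) := Finset.inf'_le φ (he k)
        _ = _ := (hval k).symm
    · apply Finset.le_inf'
      intro j hj
      obtain ⟨k, hk⟩ := hesurj j hj
      calc Finset.univ.inf' Finset.univ_nonempty
            (fun k => r (e k) / (-(q (e k))) + p (e k) / (-(q (e k))) * ε)
          ≤ r (e k) / (-(q (e k))) + p (e k) / (-(q (e k))) * ε :=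
            Finset.inf'_le _ (Finset.mem_univ k)
        _ = φ j := by rw [hval k, hk]
end

section
/- Price of stability of approximate CCE: for any finite game with utilities in [0,1] that possesses at least one (exact) coarse correlated equilibrium, and for every ε ∈ [0,1], EWF(ε) ≥ ε · max_{π∈Δ(𝒜)} SW(π). Equivalently, if the optimal social welfare is positive, the ratio of the best social welfare among ε-CCEs to the optimal social welfare is at least ε. -/
/-
Mixing an arbitrary distribution `π` with an exact CCE `π₀` in proportions `ε : 1 - ε` gives an
`ε`-CCE: every deviation gain is linear in the distribution, at most `1` under `π` and at most `0`
under `π₀`. Its welfare is `ε · SW(π) + (1 - ε) · SW(π₀) ≥ ε · SW(π)`, since welfare is nonnegative.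
-/

open Finset

section Distributions

variable {X : Type*} [Fintype X]

theorem sum_add_mul_eq (s t : ℝ) (p q f : X → ℝ) :
    ∑ x, (s * p x + t * q x) * f x = s * ∑ x, p x * f x + t * ∑ x, q x * f x := by
  simp only [mul_sum, ← sum_add_distrib]
  exact sum_congr rfl fun x _ => by ring

theorem IsDist.mix {p q : X → ℝ} (hp : IsDist p) (hq : IsDist q) {t : ℝ} (ht₀ : 0 ≤ t)
    (ht₁ : t ≤ 1) : IsDist fun x => t * p x + (1 - t) * q x := by
  refine ⟨fun x => ?_, ?_⟩
  · have := hp.1 x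
    have := hq.1 x
    have : 0 ≤ 1 - t := sub_nonneg.mpr ht₁
    positivity
  · rw [sum_add_distrib, ← mul_sum, ← mul_sum, hp.2, hq.2]
    ring

theorem IsDist.sum_mul_le {p : X → ℝ} (hp : IsDist p) {f : X → ℝ} {c : ℝ} (hf : ∀ x, f x ≤ c) :
    ∑ x, p x * f x ≤ c :=
  calc ∑ x, p x * f x ≤ ∑ x, p x * c :=
        sum_le_sum fun x _ => mul_le_mul_of_nonneg_left (hf x) (hp.1 x)
    _ = c := by rw [← sum_mul, hp.2, one_mul]

end Distributions

section Game

variable {N : ℕ} {A : Fin N → Type} [∀ i, Fintype (A i)] {U : Fin N → ((i : Fin N) → A i) → ℝ}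

theorem SW_add_mul_eq (s t : ℝ) (p q : ((i : Fin N) → A i) → ℝ) :
    SW U (fun a => s * p a + t * q a) = s * SW U p + t * SW U q := by
  simp only [SW, sum_add_mul_eq, sum_add_distrib, mul_sum]

theorem SW_nonneg (hU : ∀ i a, U i a ∈ Set.Icc (0 : ℝ) 1) {π : ((i : Fin N) → A i) → ℝ}
    (hπ : IsDist π) : 0 ≤ SW U π :=
  sum_nonneg fun i _ => sum_nonneg fun a _ => mul_nonneg (hπ.1 a) (hU i a).1

theorem SW_le_card (hU : ∀ i a, U i a ∈ Set.Icc (0 : ℝ) 1) {π : ((i : Fin N) → A i) → ℝ}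
    (hπ : IsDist π) : SW U π ≤ N :=
  calc SW U π ≤ ∑ _i : Fin N, (1 : ℝ) := sum_le_sum fun i _ => hπ.sum_mul_le fun a => (hU i a).2
    _ = N := by simp

variable [∀ i, DecidableEq (A i)]

theorem SW_le_EWF (hU : ∀ i a, U i a ∈ Set.Icc (0 : ℝ) 1) {π : ((i : Fin N) → A i) → ℝ}
    (hπ : IsDist π) {ε : ℝ} (hε : expl U π ≤ ε) : SW U π ≤ EWF U ε :=
  le_csSup ⟨N, by rintro x ⟨π', hπ', -, rfl⟩; exact SW_le_card hU hπ'⟩ ⟨π, hπ, hε, rfl⟩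

theorem deviation_gain_le_expl (π : ((i : Fin N) → A i) → ℝ) (i : Fin N) (b : A i) :
    ∑ a, π a * (U i (Function.update a i b) - U i a) ≤ expl U π := by
  refine le_csSup (Set.Finite.bddAbove ?_) ⟨i, b, rfl⟩
  refine (Set.finite_range fun d : (i : Fin N) × A i =>
    ∑ a, π a * (U d.1 (Function.update a d.1 d.2) - U d.1 a)).subset ?_
  rintro x ⟨i, b, rfl⟩
  exact ⟨⟨i, b⟩, rfl⟩

theorem expl_le_of_forall {π : ((i : Fin N) → A i) → ℝ} {c : ℝ} (hc : 0 ≤ c)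
    (h : ∀ i b, ∑ a, π a * (U i (Function.update a i b) - U i a) ≤ c) : expl U π ≤ c :=
  Real.sSup_le (by rintro x ⟨i, b, rfl⟩; exact h i b) hc

theorem expl_mix_le (hU : ∀ i a, U i a ∈ Set.Icc (0 : ℝ) 1) {π π₀ : ((i : Fin N) → A i) → ℝ}
    (hπ : IsDist π) (hπ₀ : expl U π₀ ≤ 0) {t : ℝ} (ht₀ : 0 ≤ t) (ht₁ : t ≤ 1) :
    expl U (fun a => t * π a + (1 - t) * π₀ a) ≤ t := by
  refine expl_le_of_forall ht₀ fun i b => ?_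
  have hgain : ∑ a, π a * (U i (Function.update a i b) - U i a) ≤ 1 :=
    hπ.sum_mul_le fun a => by linarith [(hU i (Function.update a i b)).2, (hU i a).1]
  have hgain₀ := (deviation_gain_le_expl (U := U) π₀ i b).trans hπ₀
  rw [sum_add_mul_eq]
  nlinarith

theorem mul_SW_le_EWF (hU : ∀ i a, U i a ∈ Set.Icc (0 : ℝ) 1) {π₀ : ((i : Fin N) → A i) → ℝ}
    (hπ₀ : IsDist π₀) (hCCE : expl U π₀ ≤ 0) {π : ((i : Fin N) → A i) → ℝ} (hπ : IsDist π)
    {ε : ℝ} (hε₀ : 0 ≤ ε) (hε₁ : ε ≤ 1) : ε * SW U π ≤ EWF U ε := by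
  have hmix := SW_le_EWF hU (hπ.mix hπ₀ hε₀ hε₁) (expl_mix_le hU hπ hCCE hε₀ hε₁)
  rw [SW_add_mul_eq] at hmix
  nlinarith [SW_nonneg hU hπ₀]

end Game

theorem stmt7_general {N : ℕ} {A : Fin N → Type} [∀ i, Fintype (A i)] [∀ i, DecidableEq (A i)]
    (U : Fin N → ((i : Fin N) → A i) → ℝ) (hU : ∀ i a, U i a ∈ Set.Icc (0 : ℝ) 1)
    (hCCE : ∃ π, IsDist π ∧ expl U π ≤ 0) :
    ∀ ε ∈ Set.Icc (0 : ℝ) 1,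
      ε * sSup {x | ∃ π, IsDist π ∧ x = SW U π} ≤ EWF U ε := by
  rintro ε ⟨hε₀, hε₁⟩
  obtain ⟨π₀, hπ₀, hπ₀CCE⟩ := hCCE
  rw [← smul_eq_mul, ← Real.sSup_smul_of_nonneg hε₀]
  refine Real.sSup_le ?_ ((SW_nonneg hU hπ₀).trans (SW_le_EWF hU hπ₀ (hπ₀CCE.trans hε₀)))
  rintro _ ⟨_, ⟨π, hπ, rfl⟩, rfl⟩
  exact mul_SW_le_EWF hU hπ₀ hπ₀CCE hπ hε₀ hε₁

/-- Price of stability of approximate CCE: for any finite game with utilities in `[0,1]`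
possessing a CCE, and every `ε ∈ [0,1]`, `EWF(ε) ≥ ε · max_{π∈Δ(𝒜)} SW(π)`. -/
theorem stmt7 {N : ℕ} {A : Fin N → Type} [∀ i, Fintype (A i)] [∀ i, DecidableEq (A i)]
    [∀ i, Nonempty (A i)]
    (U : Fin N → ((i : Fin N) → A i) → ℝ) (hU : ∀ i a, U i a ∈ Set.Icc (0 : ℝ) 1)
    (hCCE : ∃ π, IsDist π ∧ expl U π ≤ 0) :
    ∀ ε ∈ Set.Icc (0 : ℝ) 1,
      ε * sSup {x | ∃ π, IsDist π ∧ x = SW U π} ≤ EWF U ε :=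
  stmt7_general U hU hCCE
end

section
/- Welfare-constrained optimum solves the weighted objective: fix a finite game with utilities in [0,1] and ε > 0. Define for a joint strategy π its exploitability expl(π) = max_{i} max_{â_i∈𝒜_i} E_{a∼π}[𝒰_i(â_i, a_{−i}) − 𝒰_i(a)] and the grand-coalition average gain g(π) = max_{â∈𝒜} (1/N) Σ_{i=1}^N E_{a∼π}[𝒰_i(â) − 𝒰_i(a)] (note g(π) ≥ 0). Let π* maximize social welfare SW(π) = Σ_i E_π[𝒰_i] subject to expl(π) ≤ ε (such a maximizer exists), let g* = g(π*), and set w = g*/(ε + g*) ∈ [0,1). Then π* minimizes the weighted objective W(π) = max(w · expl(π), (1 − w) · g(π)) over all joint strategies π ∈ Δ(𝒜). -/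
/-!
The weight `w = g*/(ε + g*)` is chosen so that `w·ε = (1 − w)·g*`, hence the objective of `π*`
is `(1 − w)·g*`. A competitor `π` with `expl π > ε` already pays `w·expl π > w·ε`. A competitor
with `expl π ≤ ε` is feasible, so its welfare is at most that of `π*`; since
`g(π) = max_â (1/N)(Σ_i 𝒰_i(â) − SW(π))` is antitone in the welfare, it pays
`(1 − w)·g(π) ≥ (1 − w)·g*`.
-/

open Finset

/-- The grand-coalition average deviation gain:
`g(π) = max_{â∈𝒜} (1/N) Σ_{i=1}^N E_{a∼π}[𝒰_i(â) − 𝒰_i(a)]`. -/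
noncomputable def gGrand {N : ℕ} {A : Fin N → Type} [∀ i, Fintype (A i)]
    (U : Fin N → ((i : Fin N) → A i) → ℝ) (π : ((i : Fin N) → A i) → ℝ) : ℝ :=
  sSup {x | ∃ dev : (i : Fin N) → A i,
    x = (N : ℝ)⁻¹ * ∑ i, ∑ a, π a * (U i dev - U i a)}

namespace IsDist

variable {X : Type*} [Fintype X] {p : X → ℝ}

theorem sum_mul_sub_const (hp : IsDist p) (f : X → ℝ) (c : ℝ) :
    ∑ x, p x * (f x - c) = ∑ x, p x * f x - c := by
  simp only [mul_sub, sum_sub_distrib, ← sum_mul, hp.2, one_mul]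

theorem sum_mul_const_sub (hp : IsDist p) (f : X → ℝ) (c : ℝ) :
    ∑ x, p x * (c - f x) = c - ∑ x, p x * f x := by
  simp only [mul_sub, sum_sub_distrib, ← sum_mul, hp.2, one_mul]

theorem sum_mul_le_ciSup (hp : IsDist p) (f : X → ℝ) : ∑ x, p x * f x ≤ ⨆ x, f x :=
  calc ∑ x, p x * f x ≤ ∑ x, p x * ⨆ y, f y :=
        sum_le_sum fun x _ ↦ mul_le_mul_of_nonneg_left
          (le_ciSup (Set.finite_range f).bddAbove x) (hp.1 x)
    _ = ⨆ y, f y := by rw [← sum_mul, hp.2, one_mul]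

end IsDist

section GrandCoalition

variable {N : ℕ} {A : Fin N → Type} [∀ i, Fintype (A i)] (U : Fin N → ((i : Fin N) → A i) → ℝ)

theorem gGrand_eq_ciSup {π : ((i : Fin N) → A i) → ℝ} (hπ : IsDist π) :
    gGrand U π = ⨆ dev, (N : ℝ)⁻¹ * (∑ i, U i dev - SW U π) := by
  have hgain : ∀ dev, (N : ℝ)⁻¹ * ∑ i, ∑ a, π a * (U i dev - U i a)
      = (N : ℝ)⁻¹ * (∑ i, U i dev - SW U π) := fun dev ↦ by
    rw [SW, ← sum_sub_distrib]
    exact congrArg _ (sum_congr rfl fun i _ ↦ hπ.sum_mul_const_sub (U i) (U i dev))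
  rw [gGrand, iSup]
  congr 1
  ext x
  simp only [Set.mem_ofPred_eq, Set.mem_range, hgain, eq_comm]

theorem gGrand_antitone_SW {π π' : ((i : Fin N) → A i) → ℝ} (hπ : IsDist π) (hπ' : IsDist π')
    (hSW : SW U π ≤ SW U π') : gGrand U π' ≤ gGrand U π := by
  rw [gGrand_eq_ciSup U hπ, gGrand_eq_ciSup U hπ']
  exact ciSup_mono (Set.finite_range _).bddAbove fun dev ↦
    mul_le_mul_of_nonneg_left (by linarith) (by positivity)

theorem gGrand_nonneg {π : ((i : Fin N) → A i) → ℝ} (hπ : IsDist π) : 0 ≤ gGrand U π := by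
  have hSW : ∑ dev, π dev * ∑ i, U i dev = SW U π := by
    simp only [SW, mul_sum]
    exact sum_comm
  calc (0 : ℝ) = ∑ dev, π dev * ((N : ℝ)⁻¹ * (∑ i, U i dev - SW U π)) := by
        simp only [mul_left_comm (π _), ← mul_sum, hπ.sum_mul_sub_const, hSW, sub_self, mul_zero]
    _ ≤ gGrand U π := gGrand_eq_ciSup U hπ ▸ hπ.sum_mul_le_ciSup _

end GrandCoalition

theorem max_weighted_le_of_le_eps {ε g e₀ e g' : ℝ} (hε : 0 < ε) (hg : 0 ≤ g) (he₀ : e₀ ≤ ε)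
    (hg' : e ≤ ε → g ≤ g') :
    max (g / (ε + g) * e₀) ((1 - g / (ε + g)) * g) ≤
      max (g / (ε + g) * e) ((1 - g / (ε + g)) * g') := by
  set w := g / (ε + g) with hw
  have hεg : 0 < ε + g := by linarith
  have hw0 : 0 ≤ w := div_nonneg hg hεg.le
  have hw1 : 0 ≤ 1 - w := sub_nonneg.2 ((div_le_one hεg).2 (by linarith))
  have hbalance : w * ε = (1 - w) * g := by
    rw [hw]
    field_simp
    ring
  have hlhs : max (w * e₀) ((1 - w) * g) = (1 - w) * g :=
    max_eq_right (hbalance ▸ mul_le_mul_of_nonneg_left he₀ hw0)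
  rw [hlhs]
  rcases le_or_gt e ε with he | he
  · exact le_max_of_le_right (mul_le_mul_of_nonneg_left (hg' he) hw1)
  · exact le_max_of_le_left (hbalance ▸ mul_le_mul_of_nonneg_left he.le hw0)

theorem stmt10_general {N : ℕ} {A : Fin N → Type} [∀ i, Fintype (A i)] [∀ i, DecidableEq (A i)]
    (U : Fin N → ((i : Fin N) → A i) → ℝ)
    (ε : ℝ) (hε : 0 < ε)
    (πstar : ((i : Fin N) → A i) → ℝ) (hπstar : IsDist πstar)
    (hfeas : expl U πstar ≤ ε)
    (hmax : ∀ π, IsDist π → expl U π ≤ ε → SW U π ≤ SW U πstar) :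
    ∀ π, IsDist π →
      max ((gGrand U πstar / (ε + gGrand U πstar)) * expl U πstar)
          ((1 - gGrand U πstar / (ε + gGrand U πstar)) * gGrand U πstar) ≤
        max ((gGrand U πstar / (ε + gGrand U πstar)) * expl U π)
          ((1 - gGrand U πstar / (ε + gGrand U πstar)) * gGrand U π) := by
  intro π hπ
  exact max_weighted_le_of_le_eps hε (gGrand_nonneg U hπstar) hfeas fun hfeasπ ↦
    gGrand_antitone_SW U hπ hπstar (hmax π hπ hfeasπ)

/-- Welfare-constrained optimum solves the weighted objective: if `π*` maximizes social
welfare subject to `expl(π) ≤ ε` and `w = g*/(ε + g*)` with `g* = g(π*)`, then `π*`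
minimizes `W(π) = max(w·expl(π), (1−w)·g(π))` over all joint strategies. -/
theorem stmt10 {N : ℕ} {A : Fin N → Type} [∀ i, Fintype (A i)] [∀ i, DecidableEq (A i)]
    [∀ i, Nonempty (A i)] (hN : 0 < N)
    (U : Fin N → ((i : Fin N) → A i) → ℝ) (hU : ∀ i a, U i a ∈ Set.Icc (0 : ℝ) 1)
    (ε : ℝ) (hε : 0 < ε)
    (πstar : ((i : Fin N) → A i) → ℝ) (hπstar : IsDist πstar)
    (hfeas : expl U πstar ≤ ε)
    (hmax : ∀ π, IsDist π → expl U π ≤ ε → SW U π ≤ SW U πstar) :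
    ∀ π, IsDist π →
      max ((gGrand U πstar / (ε + gGrand U πstar)) * expl U πstar)
          ((1 - gGrand U πstar / (ε + gGrand U πstar)) * gGrand U πstar) ≤
        max ((gGrand U πstar / (ε + gGrand U πstar)) * expl U π)
          ((1 - gGrand U πstar / (ε + gGrand U πstar)) * gGrand U π) :=
  stmt10_general U ε hε πstar hπstar hfeas hmax
end

section
/- In a polymatrix game on an undirected simple graph G on the player set [N], for any joint strategy π and any two distinct non-adjacent players i and j, the best average deviation gain of the coalition {i, j} is at most the larger of the two players' unilateral deviation gains: max_{(â_i, â_j) ∈ 𝒜_i × 𝒜_j} (1/2) Σ_{k∈{i,j}} E_{a∼π}[𝒰_k(â_i, â_j, a_{−{i,j}}) − 𝒰_k(a)] ≤ max_{k∈{i,j}} max_{â_k∈𝒜_k} E_{a∼π}[𝒰_k(â_k, a_{−k}) − 𝒰_k(a)]. Consequently, the coalition exploitability over all coalitions of size at most two equals the coalition exploitability over singletons together with pairs of adjacent players. -/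
open Finset

/-- Utility of player `k` in the polymatrix game on graph `G` with pairwise utilities `W`. -/
noncomputable def polyU {N : ℕ} {A : Fin N → Type} [∀ i, Fintype (A i)]
    (G : SimpleGraph (Fin N)) [DecidableRel G.Adj]
    (W : ∀ i j : Fin N, A i → A j → ℝ) (k : Fin N) (a : (i : Fin N) → A i) : ℝ :=
  ∑ l ∈ Finset.univ.filter (G.Adj k), W k l (a k) (a l)

/-- Coalition exploitability with respect to a family of coalitions given as a set. -/
noncomputable def CEset {N : ℕ} {A : Fin N → Type} [∀ i, Fintype (A i)]
    (U : Fin N → ((i : Fin N) → A i) → ℝ) (𝒮 : Set (Finset (Fin N)))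
    (π : ((i : Fin N) → A i) → ℝ) : ℝ :=
  sSup {x | ∃ S ∈ 𝒮, ∃ dev : (i : Fin N) → A i,
    x = (S.card : ℝ)⁻¹ * ∑ i ∈ S, ∑ a, π a * (U i (replaceProfile S dev a) - U i a)}


/-!
Since `i` and `j` are not adjacent, the utility of `i` does not depend on `a j` and vice versa.
Hence after a joint deviation `(x, y)` of `{i, j}` player `i` gains exactly what it would gain by
deviating to `x` alone, and `j` what it would gain by deviating to `y` alone: the average gain of
the pair is the mean of two unilateral gains, so at most the larger of them. Thus non-adjacent
pairs never raise the exploitability over singletons. The suprema in `CEset` range over finitely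
many values, so they are maxima.
-/

section CoalitionExploitability

variable {N : ℕ} {A : Fin N → Type} [∀ i, Fintype (A i)]

noncomputable def coalitionGain (U : Fin N → ((i : Fin N) → A i) → ℝ)
    (π : ((i : Fin N) → A i) → ℝ) (S : Finset (Fin N)) (dev : (i : Fin N) → A i) : ℝ :=
  (S.card : ℝ)⁻¹ * ∑ i ∈ S, ∑ a, π a * (U i (replaceProfile S dev a) - U i a)

variable (U : Fin N → ((i : Fin N) → A i) → ℝ) (π : ((i : Fin N) → A i) → ℝ)

theorem bddAbove_coalitionGain (𝒮 : Set (Finset (Fin N))) :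
    BddAbove {x | ∃ S ∈ 𝒮, ∃ dev, x = coalitionGain U π S dev} := by
  refine ((Set.finite_range fun p : Finset (Fin N) × ((i : Fin N) → A i) =>
    coalitionGain U π p.1 p.2).subset ?_).bddAbove
  rintro x ⟨S, -, dev, rfl⟩
  exact ⟨(S, dev), rfl⟩

theorem coalitionGain_le_CEset {𝒮 : Set (Finset (Fin N))} {S : Finset (Fin N)} (hS : S ∈ 𝒮)
    (dev : (i : Fin N) → A i) : coalitionGain U π S dev ≤ CEset U 𝒮 π :=
  le_csSup (bddAbove_coalitionGain U π 𝒮) ⟨S, hS, dev, rfl⟩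

theorem CEset_le_of_forall_coalitionGain_le [∀ i, Nonempty (A i)] {𝒮 : Set (Finset (Fin N))}
    (h𝒮 : 𝒮.Nonempty) {c : ℝ} (h : ∀ S ∈ 𝒮, ∀ dev, coalitionGain U π S dev ≤ c) :
    CEset U 𝒮 π ≤ c := by
  obtain ⟨S, hS⟩ := h𝒮
  refine csSup_le ⟨_, S, hS, Classical.arbitrary _, rfl⟩ ?_
  rintro x ⟨S, hS, dev, rfl⟩
  exact h S hS dev

theorem CEset_mono [∀ i, Nonempty (A i)] {𝒮 𝒯 : Set (Finset (Fin N))} (h𝒮 : 𝒮.Nonempty)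
    (h : 𝒮 ⊆ 𝒯) : CEset U 𝒮 π ≤ CEset U 𝒯 π :=
  CEset_le_of_forall_coalitionGain_le U π h𝒮 fun _ hS dev =>
    coalitionGain_le_CEset U π (h hS) dev

end CoalitionExploitability

theorem replaceProfile_singleton {N : ℕ} {A : Fin N → Type} (k : Fin N)
    (dev a : (i : Fin N) → A i) :
    replaceProfile {k} dev a = Function.update a k (dev k) := by
  funext m
  by_cases hm : m = k
  · subst hm; simp [replaceProfile]
  · simp [replaceProfile, hm]

theorem replaceProfile_pair {N : ℕ} {A : Fin N → Type} (k l : Fin N)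
    (dev a : (i : Fin N) → A i) :
    replaceProfile {k, l} dev a = Function.update (Function.update a k (dev k)) l (dev l) := by
  funext m
  by_cases hl : m = l
  · subst hl; simp [replaceProfile]
  · by_cases hk : m = k
    · subst hk; simp [replaceProfile, hl]
    · simp [replaceProfile, hk, hl]

section Polymatrix

variable {N : ℕ} {A : Fin N → Type} [∀ i, Fintype (A i)]
  (G : SimpleGraph (Fin N)) [DecidableRel G.Adj] (W : ∀ i j : Fin N, A i → A j → ℝ)

theorem polyU_congr {k : Fin N} {a b : (i : Fin N) → A i} (hk : a k = b k)
    (h : ∀ l, G.Adj k l → a l = b l) : polyU G W k a = polyU G W k b :=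
  Finset.sum_congr rfl fun l hl => by rw [hk, h l (Finset.mem_filter.mp hl).2]

theorem polyU_update_of_not_adj {k l : Fin N} (hkl : k ≠ l) (h : ¬ G.Adj k l)
    (a : (i : Fin N) → A i) (x : A l) :
    polyU G W k (Function.update a l x) = polyU G W k a :=
  polyU_congr G W (Function.update_of_ne hkl x a) fun _ hm =>
    Function.update_of_ne (by rintro rfl; exact h hm) x a

theorem polyU_update_update_left_of_not_adj {k l : Fin N} (hkl : k ≠ l) (h : ¬ G.Adj k l)
    (a : (i : Fin N) → A i) (x : A k) (y : A l) :
    polyU G W k (Function.update (Function.update a k x) l y) =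
      polyU G W k (Function.update a k x) :=
  polyU_update_of_not_adj G W hkl h _ y

theorem polyU_update_update_right_of_not_adj {k l : Fin N} (hkl : k ≠ l) (h : ¬ G.Adj k l)
    (a : (i : Fin N) → A i) (x : A k) (y : A l) :
    polyU G W l (Function.update (Function.update a k x) l y) =
      polyU G W l (Function.update a l y) := by
  rw [Function.update_comm hkl]
  exact polyU_update_of_not_adj G W hkl.symm (fun h' => h h'.symm) _ x

theorem pairGain_le_max_unilateralGain [∀ i, Nonempty (A i)] (π : ((i : Fin N) → A i) → ℝ)
    {k l : Fin N} (hkl : k ≠ l) (h : ¬ G.Adj k l) (x : A k) (y : A l) :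
    (1 / 2 : ℝ) *
        ((∑ a, π a * (polyU G W k (Function.update (Function.update a k x) l y) -
            polyU G W k a)) +
          ∑ a, π a * (polyU G W l (Function.update (Function.update a k x) l y) -
            polyU G W l a)) ≤
      max
        ((Finset.univ : Finset (A k)).sup' Finset.univ_nonempty fun b =>
          ∑ a, π a * (polyU G W k (Function.update a k b) - polyU G W k a))
        ((Finset.univ : Finset (A l)).sup' Finset.univ_nonempty fun b =>
          ∑ a, π a * (polyU G W l (Function.update a l b) - polyU G W l a)) := by
  simp only [polyU_update_update_left_of_not_adj G W hkl h,
    polyU_update_update_right_of_not_adj G W hkl h]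
  have mean_le_max {u v U V : ℝ} (hu : u ≤ U) (hv : v ≤ V) : 1 / 2 * (u + v) ≤ max U V := by
    linarith [hu.trans (le_max_left U V), hv.trans (le_max_right U V)]
  exact mean_le_max
    (Finset.le_sup' (fun b => ∑ a, π a * (polyU G W k (Function.update a k b) - polyU G W k a))
      (Finset.mem_univ x))
    (Finset.le_sup' (fun b => ∑ a, π a * (polyU G W l (Function.update a l b) - polyU G W l a))
      (Finset.mem_univ y))

theorem coalitionGain_pair_of_not_adj (π : ((i : Fin N) → A i) → ℝ) {k l : Fin N}
    (hkl : k ≠ l) (h : ¬ G.Adj k l) (dev : (i : Fin N) → A i) :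
    coalitionGain (polyU G W) π {k, l} dev =
      2⁻¹ * (coalitionGain (polyU G W) π {k} dev + coalitionGain (polyU G W) π {l} dev) := by
  simp only [coalitionGain, Finset.card_pair hkl, Finset.sum_pair hkl, Finset.card_singleton,
    Finset.sum_singleton, replaceProfile_pair, replaceProfile_singleton,
    polyU_update_update_left_of_not_adj G W hkl h,
    polyU_update_update_right_of_not_adj G W hkl h]
  norm_num

theorem coalitionGain_pair_le_CEset_of_not_adj (π : ((i : Fin N) → A i) → ℝ)
    {𝒮 : Set (Finset (Fin N))} {k l : Fin N} (hk : {k} ∈ 𝒮) (hl : {l} ∈ 𝒮) (hkl : k ≠ l)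
    (h : ¬ G.Adj k l) (dev : (i : Fin N) → A i) :
    coalitionGain (polyU G W) π {k, l} dev ≤ CEset (polyU G W) 𝒮 π := by
  rw [coalitionGain_pair_of_not_adj G W π hkl h]
  linarith [coalitionGain_le_CEset (polyU G W) π hk dev,
    coalitionGain_le_CEset (polyU G W) π hl dev]

end Polymatrix

theorem stmt12_general {N : ℕ} {A : Fin N → Type} [∀ i, Fintype (A i)]
    [∀ i, Nonempty (A i)]
    (G : SimpleGraph (Fin N)) [DecidableRel G.Adj]
    (W : ∀ i j : Fin N, A i → A j → ℝ)
    (π : ((i : Fin N) → A i) → ℝ)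
    (i j : Fin N) (hij : i ≠ j) (hadj : ¬ G.Adj i j) :
    ((Finset.univ : Finset (A i × A j)).sup' Finset.univ_nonempty fun p =>
        (1 / 2 : ℝ) *
          ((∑ a, π a * (polyU G W i (Function.update (Function.update a i p.1) j p.2) -
              polyU G W i a)) +
            ∑ a, π a * (polyU G W j (Function.update (Function.update a i p.1) j p.2) -
              polyU G W j a)) ≤
      max
        ((Finset.univ : Finset (A i)).sup' Finset.univ_nonempty fun b =>
          ∑ a, π a * (polyU G W i (Function.update a i b) - polyU G W i a))
        ((Finset.univ : Finset (A j)).sup' Finset.univ_nonempty fun b =>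
          ∑ a, π a * (polyU G W j (Function.update a j b) - polyU G W j a))) ∧
    CEset (polyU G W) {S | S.Nonempty ∧ S.card ≤ 2} π =
      CEset (polyU G W)
        {S | (∃ k, S = {k}) ∨ ∃ k l, G.Adj k l ∧ S = ({k, l} : Finset (Fin N))} π := by
  obtain ⟨x, y⟩ : A i × A j := Classical.arbitrary _
  -- `fun p =>` extends past `≤`: the first conjunct is a `sup'` in `Prop`, so one `p` suffices.
  refine ⟨Finset.le_sup' (α := Prop) _ (Finset.mem_univ (x, y))
    (pairGain_le_max_unilateralGain G W π hij hadj x y), le_antisymm ?_ ?_⟩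
  · refine CEset_le_of_forall_coalitionGain_le _ _ ⟨{i}, by simp⟩ ?_
    rintro S ⟨hS, hS2⟩ dev
    have hcard : S.card = 1 ∨ S.card = 2 := by have := hS.card_pos; omega
    obtain ⟨k, rfl⟩ | ⟨k, l, hkl, rfl⟩ := (Finset.card_eq_one.or Finset.card_eq_two).mp hcard
    · exact coalitionGain_le_CEset _ _ (Or.inl ⟨k, rfl⟩) dev
    by_cases hadj_kl : G.Adj k l
    · exact coalitionGain_le_CEset _ _ (Or.inr ⟨k, l, hadj_kl, rfl⟩) dev
    exact coalitionGain_pair_le_CEset_of_not_adj G W π (Or.inl ⟨k, rfl⟩) (Or.inl ⟨l, rfl⟩) hkl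
      hadj_kl dev
  · refine CEset_mono _ _ ⟨{i}, Or.inl ⟨i, rfl⟩⟩ ?_
    rintro S (⟨k, rfl⟩ | ⟨k, l, -, rfl⟩)
    · exact ⟨Finset.singleton_nonempty k, by simp⟩
    · exact ⟨Finset.insert_nonempty k {l}, (Finset.card_insert_le _ _).trans (by simp)⟩

/-- In a polymatrix game, for any two distinct non-adjacent players `i`, `j`, the best
average deviation gain of the coalition `{i,j}` is at most the larger of the two players'
unilateral deviation gains; consequently the coalition exploitability over all coalitions
of size at most two equals that over singletons together with adjacent pairs. -/
theorem stmt12 {N : ℕ} {A : Fin N → Type} [∀ i, Fintype (A i)] [∀ i, DecidableEq (A i)]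
    [∀ i, Nonempty (A i)]
    (G : SimpleGraph (Fin N)) [DecidableRel G.Adj]
    (W : ∀ i j : Fin N, A i → A j → ℝ)
    (hW : ∀ i j, G.Adj i j → ∀ x y, W i j x y ∈ Set.Icc (0 : ℝ) 1)
    (π : ((i : Fin N) → A i) → ℝ) (hπ : IsDist π)
    (i j : Fin N) (hij : i ≠ j) (hadj : ¬ G.Adj i j) :
    ((Finset.univ : Finset (A i × A j)).sup' Finset.univ_nonempty fun p =>
        (1 / 2 : ℝ) *
          ((∑ a, π a * (polyU G W i (Function.update (Function.update a i p.1) j p.2) -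
              polyU G W i a)) +
            ∑ a, π a * (polyU G W j (Function.update (Function.update a i p.1) j p.2) -
              polyU G W j a)) ≤
      max
        ((Finset.univ : Finset (A i)).sup' Finset.univ_nonempty fun b =>
          ∑ a, π a * (polyU G W i (Function.update a i b) - polyU G W i a))
        ((Finset.univ : Finset (A j)).sup' Finset.univ_nonempty fun b =>
          ∑ a, π a * (polyU G W j (Function.update a j b) - polyU G W j a))) ∧
    CEset (polyU G W) {S | S.Nonempty ∧ S.card ≤ 2} π =
      CEset (polyU G W)
        {S | (∃ k, S = {k}) ∨ ∃ k l, G.Adj k l ∧ S = ({k, l} : Finset (Fin N))} π :=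
  stmt12_general G W π i j hij hadj
end

section
/- Polymatrix edge-player transformation preserves coalition exploitability: given a polymatrix game on graph G = ([N], E) and a coalition family 𝒮 of nonempty subsets of [N], construct a new game whose players are [N] together with two edge players e_{i,j} and e_{j,i} for each edge (i,j) ∈ E; each edge player has a single action; the utility of edge player e_{i,j} is 𝒰̃_{e_{i,j}}(a) = 𝒰_{i,j}(a_i, a_j), and the utility of each original player i ∈ [N] is identically 0. For S ∈ 𝒮 let S̃ = S ∪ {e_{i,j} : i ∈ S, (i,j) ∈ E} and 𝒮̃ = {S̃ : S ∈ 𝒮}. Then for every joint strategy π ∈ Δ(𝒜): max_{S∈𝒮} max_{â_S∈𝒜_S} (1/|S|) Σ_{i∈S} E_{a∼π}[𝒰_i(â_S, a_{−S}) − 𝒰_i(a)] = max_{S̃∈𝒮̃} max_{â_{S̃∩[N]}∈𝒜_{S̃∩[N]}} (1/|S̃ ∩ [N]|) Σ_{i∈S̃} E_{a∼π}[𝒰̃_i(â_{S̃∩[N]}, a_{−(S̃∩[N])}) − 𝒰̃_i(a)]. -/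
open Finset

/-- Edge players: one player `e_{i,j}` for each ordered pair `(i,j)` with `(i,j) ∈ E`. -/
abbrev EPlayer {N : ℕ} (G : SimpleGraph (Fin N)) : Type :=
  {e : Fin N × Fin N // G.Adj e.1 e.2}

/-- The player set of the transformed game: original players together with edge players. -/
abbrev NewPlayer {N : ℕ} (G : SimpleGraph (Fin N)) : Type := Fin N ⊕ EPlayer G

/-- Utilities of the transformed game: edge player `e_{i,j}` receives `𝒰_{i,j}(a_i, a_j)`;
original players receive `0`.  (Each edge player has a single action, so joint strategies
are identified with distributions over the original joint action set.) -/
noncomputable def newU {N : ℕ} {A : Fin N → Type}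
    (G : SimpleGraph (Fin N)) (W : ∀ i j : Fin N, A i → A j → ℝ) :
    NewPlayer G → ((i : Fin N) → A i) → ℝ
  | Sum.inl _, _ => 0
  | Sum.inr e, a => W e.val.1 e.val.2 (a e.val.1) (a e.val.2)

/-- The coalition `S̃ = S ∪ {e_{i,j} : i ∈ S, (i,j) ∈ E}` of the transformed game. -/
noncomputable def Stilde {N : ℕ} (G : SimpleGraph (Fin N)) [DecidableRel G.Adj]
    (S : Finset (Fin N)) : Finset (NewPlayer G) :=
  S.image Sum.inl ∪
    (Finset.univ.filter fun e : EPlayer G => e.val.1 ∈ S).image Sum.inr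

/-!
Original players of the transformed game earn nothing, while the edge players `e_{i,j}`,
`i ∈ S`, of `S̃` carry exactly the edge terms of the polymatrix utilities of the players of `S`.
Since moreover `S̃ ∩ [N] = S` and the deviation of `S̃ ∩ [N]` is the deviation of `S`, each gain
of a coalition `S̃` equals the corresponding gain of `S`, so the two suprema range over one set.
-/

section EdgePlayers

variable {N : ℕ} (G : SimpleGraph (Fin N)) [DecidableRel G.Adj]

@[simp]
lemma inl_mem_Stilde {S : Finset (Fin N)} {k : Fin N} :
    (Sum.inl k : NewPlayer G) ∈ Stilde G S ↔ k ∈ S := by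
  simp [Stilde]

lemma Stilde_inter_image_inl (S : Finset (Fin N)) :
    Stilde G S ∩ univ.image (Sum.inl : Fin N → NewPlayer G) = S.image Sum.inl := by
  ext (k | e) <;> simp [Stilde]

lemma card_Stilde_inter_image_inl (S : Finset (Fin N)) :
    (Stilde G S ∩ univ.image (Sum.inl : Fin N → NewPlayer G)).card = S.card := by
  rw [Stilde_inter_image_inl, card_image_of_injective _ Sum.inl_injective]

lemma sum_edgePlayers_fst_mem {M : Type*} [AddCommMonoid M] (S : Finset (Fin N))
    (f : Fin N → Fin N → M) :
    ∑ e ∈ univ.filter (fun e : EPlayer G => e.val.1 ∈ S), f e.val.1 e.val.2 =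
      ∑ i ∈ S, ∑ l ∈ univ.filter (G.Adj i), f i l :=
  (sum_map _ (Function.Embedding.subtype _) fun e : Fin N × Fin N => f e.1 e.2).symm.trans <|
    sum_finset_product' _ _ _ fun e => by simp [and_comm]

variable {A : Fin N → Type} [∀ i, Fintype (A i)] (W : ∀ i j : Fin N, A i → A j → ℝ)

lemma sum_newU_Stilde (S : Finset (Fin N)) (a : (i : Fin N) → A i) :
    ∑ p ∈ Stilde G S, newU G W p a = ∑ i ∈ S, polyU G W i a := by
  have hdisj : Disjoint (S.image (Sum.inl : Fin N → NewPlayer G))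
      ((univ.filter fun e : EPlayer G => e.val.1 ∈ S).image Sum.inr) := by
    simp [disjoint_left]
  rw [Stilde, sum_union hdisj, sum_image (fun _ _ _ _ h => Sum.inl_injective h),
    sum_image (fun _ _ _ _ h => Sum.inr_injective h)]
  simp only [newU, sum_const_zero, zero_add, polyU]
  exact sum_edgePlayers_fst_mem G S fun i l => W i l (a i) (a l)

lemma sum_Stilde_gain (S : Finset (Fin N)) (dev : (i : Fin N) → A i)
    (π : ((i : Fin N) → A i) → ℝ) :
    ∑ p ∈ Stilde G S, ∑ a, π a *
        (newU G W p (fun k => if Sum.inl k ∈ Stilde G S then dev k else a k) -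
          newU G W p a) =
      ∑ i ∈ S, ∑ a, π a * (polyU G W i (replaceProfile S dev a) - polyU G W i a) := by
  rw [sum_comm, sum_comm (s := S)]
  simp only [inl_mem_Stilde, ← mul_sum, sum_sub_distrib, sum_newU_Stilde]
  rfl

end EdgePlayers

theorem stmt13_general {N : ℕ} {A : Fin N → Type} [∀ i, Fintype (A i)]
    (G : SimpleGraph (Fin N)) [DecidableRel G.Adj]
    (W : ∀ i j : Fin N, A i → A j → ℝ)
    (𝒮 : Finset (Finset (Fin N)))
    (π : ((i : Fin N) → A i) → ℝ) :
    sSup {x | ∃ S ∈ 𝒮, ∃ dev : (i : Fin N) → A i,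
        x = (S.card : ℝ)⁻¹ * ∑ i ∈ S, ∑ a, π a *
          (polyU G W i (replaceProfile S dev a) - polyU G W i a)} =
      sSup {x | ∃ S ∈ 𝒮, ∃ dev : (i : Fin N) → A i,
        x = (((Stilde G S ∩
              (Finset.univ : Finset (Fin N)).image (Sum.inl : Fin N → NewPlayer G)).card : ℝ))⁻¹ *
          ∑ p ∈ Stilde G S, ∑ a, π a *
            (newU G W p (fun k => if Sum.inl k ∈ Stilde G S then dev k else a k) -
              newU G W p a)} := by
  simp_rw [card_Stilde_inter_image_inl, sum_Stilde_gain]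

/-- The polymatrix edge-player transformation preserves the coalition exploitability. -/
theorem stmt13 {N : ℕ} {A : Fin N → Type} [∀ i, Fintype (A i)] [∀ i, DecidableEq (A i)]
    [∀ i, Nonempty (A i)]
    (G : SimpleGraph (Fin N)) [DecidableRel G.Adj]
    (W : ∀ i j : Fin N, A i → A j → ℝ)
    (hW : ∀ i j, G.Adj i j → ∀ x y, W i j x y ∈ Set.Icc (0 : ℝ) 1)
    (𝒮 : Finset (Finset (Fin N))) (h𝒮 : ∀ S ∈ 𝒮, S.Nonempty)
    (π : ((i : Fin N) → A i) → ℝ) (hπ : IsDist π) :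
    sSup {x | ∃ S ∈ 𝒮, ∃ dev : (i : Fin N) → A i,
        x = (S.card : ℝ)⁻¹ * ∑ i ∈ S, ∑ a, π a *
          (polyU G W i (replaceProfile S dev a) - polyU G W i a)} =
      sSup {x | ∃ S ∈ 𝒮, ∃ dev : (i : Fin N) → A i,
        x = (((Stilde G S ∩
              (Finset.univ : Finset (Fin N)).image (Sum.inl : Fin N → NewPlayer G)).card : ℝ))⁻¹ *
          ∑ p ∈ Stilde G S, ∑ a, π a *
            (newU G W p (fun k => if Sum.inl k ∈ Stilde G S then dev k else a k) -
              newU G W p a)} :=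
  stmt13_general G W 𝒮 π
end

section
/- In the Prisoner's Dilemma variant with parameter ζ ∈ (0, 0.2] (two players, actions {C, D}, utilities U(C,C) = (0.6, 0.6), U(C,D) = (0.2 − ζ, 1), U(D,C) = (1, 0.2 − ζ), U(D,D) = (0.2, 0.2)), for every p ∈ [0, 1] the joint strategy π_p = (1 − p)·δ_{(D,D)} + p·δ_{(C,D)} satisfies exploitability(π_p) = ζ·p and social welfare SW(π_p) = 0.4 + (0.8 − ζ)·p. -/
/-! Under `π_p` the only profitable unilateral deviation is the row player switching from C
to D on the atom `(C,D)`, which gains `ζ` on mass `p`; every other deviation gains nothing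
or loses, so the maximal gain is `ζ * p`. -/

open Finset

/-- Utility of player `i` in the Prisoner's Dilemma variant with parameter `ζ`
(`false` = Confess, `true` = Defect): U(C,C) = (0.6, 0.6), U(C,D) = (0.2 − ζ, 1),
U(D,C) = (1, 0.2 − ζ), U(D,D) = (0.2, 0.2). -/
noncomputable def pdζU (ζ : ℝ) (i : Fin 2) (a : Fin 2 → Bool) : ℝ :=
  if a i = false then (if a (i + 1) = false then 0.6 else 0.2 - ζ)
  else (if a (i + 1) = false then 1 else 0.2)

/-- The mixture `π_p = (1−p)·δ_{(D,D)} + p·δ_{(C,D)}`. -/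
noncomputable def pdζMix (p : ℝ) : (Fin 2 → Bool) → ℝ := fun a =>
  (1 - p) * (if a = ![true, true] then 1 else 0) +
    p * (if a = ![false, true] then 1 else 0)


noncomputable def deviationGain {N : ℕ} {A : Fin N → Type} [∀ i, Fintype (A i)]
    [∀ i, DecidableEq (A i)] (U : Fin N → ((i : Fin N) → A i) → ℝ)
    (π : ((i : Fin N) → A i) → ℝ) (i : Fin N) (b : A i) : ℝ :=
  ∑ a, π a * (U i (Function.update a i b) - U i a)

theorem expl_eq_of_deviationGain_le {N : ℕ} {A : Fin N → Type} [∀ i, Fintype (A i)]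
    [∀ i, DecidableEq (A i)] {U : Fin N → ((i : Fin N) → A i) → ℝ}
    {π : ((i : Fin N) → A i) → ℝ} {v : ℝ} (i₀ : Fin N) (b₀ : A i₀)
    (hv : deviationGain U π i₀ b₀ = v) (hle : ∀ i b, deviationGain U π i b ≤ v) :
    expl U π = v := by
  refine IsGreatest.csSup_eq ⟨⟨i₀, b₀, hv.symm⟩, ?_⟩
  rintro x ⟨i, b, rfl⟩
  exact hle i b

theorem sum_mix_two_points_mul {X : Type*} [Fintype X] [DecidableEq X] (p : ℝ) (x y : X)
    (f : X → ℝ) :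
    ∑ a, ((1 - p) * (if a = x then 1 else 0) + p * (if a = y then 1 else 0)) * f a =
      (1 - p) * f x + p * f y := by
  simp only [add_mul, mul_assoc, ite_mul, one_mul, zero_mul, mul_ite, mul_zero,
    sum_add_distrib, sum_ite_eq', mem_univ, if_true]

theorem deviationGain_pdζMix_zero (ζ p : ℝ) (b : Bool) :
    deviationGain (pdζU ζ) (pdζMix p) 0 b = if b then ζ * p else -ζ * (1 - p) := by
  simp only [deviationGain, pdζMix]
  rw [sum_mix_two_points_mul]
  cases b <;> simp [pdζU, Function.update] <;> ring

theorem deviationGain_pdζMix_one (ζ p : ℝ) (b : Bool) :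
    deviationGain (pdζU ζ) (pdζMix p) 1 b = if b then 0 else -ζ * (1 - p) - 0.4 * p := by
  simp only [deviationGain, pdζMix]
  rw [sum_mix_two_points_mul]
  cases b
  · simp [pdζU, Function.update, show (1 : Fin 2) + 1 = 0 from rfl]; ring
  · simp [pdζU, Function.update, show (1 : Fin 2) + 1 = 0 from rfl]

theorem SW_pdζMix (ζ p : ℝ) : SW (pdζU ζ) (pdζMix p) = 0.4 + (0.8 - ζ) * p := by
  simp only [SW, Fin.sum_univ_two, pdζMix]
  rw [sum_mix_two_points_mul, sum_mix_two_points_mul]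
  simp [pdζU, show (1 : Fin 2) + 1 = 0 from rfl]
  ring

/-- In the Prisoner's Dilemma variant with `ζ ∈ (0, 0.2]`, for every `p ∈ [0,1]` the joint
strategy `π_p = (1−p)·δ_{(D,D)} + p·δ_{(C,D)}` has exploitability exactly `ζ·p` and social
welfare exactly `0.4 + (0.8 − ζ)·p`. -/
theorem stmt18 (ζ : ℝ) (hζ : ζ ∈ Set.Ioc (0 : ℝ) 0.2) (p : ℝ) (hp : p ∈ Set.Icc (0 : ℝ) 1) :
    expl (pdζU ζ) (pdζMix p) = ζ * p ∧
      SW (pdζU ζ) (pdζMix p) = 0.4 + (0.8 - ζ) * p := by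
  obtain ⟨hζ0, -⟩ := hζ
  obtain ⟨hp0, -⟩ := hp
  refine ⟨expl_eq_of_deviationGain_le 0 true (by simp [deviationGain_pdζMix_zero]) ?_,
    SW_pdζMix ζ p⟩
  intro i b
  fin_cases i
  · rw [Fin.zero_eta, deviationGain_pdζMix_zero]
    cases b
    · simp only [Bool.false_eq_true, if_false]; nlinarith
    · rfl
  · rw [Fin.mk_one, deviationGain_pdζMix_one]
    cases b
    · simp only [Bool.false_eq_true, if_false]; nlinarith
    · simp only [if_true]; positivity
end
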